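/- arXiv:2507.00671 — 5 statements merged into one kernel-verified Lean document; each statement's English description precedes it below -/
import Mathlib

section
/- Contrastive divergence lower bound (Proposition 1): Assume all integrals appearing below are finite and that P_{n+1} admits a positive density p_{n+1} with respect to λ. Then the contrastive divergence satisfies Δ_n ≥ E[ log( p(X_{n+1}) / ( p(X_n) · p̂(X_{n+1}|X_n) ) ) ] + E[ log( p_n(X_n) / (1 + p_n(X_{n+1})) ) ], where both expectations are over the joint law of (X_n, X_{n+1}), i.e. ∫∫ (·) κ(x)(dx') P_n(dx). -/
open MeasureTheory ENNReal

noncomputable section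

/-- The acceptance–proposal density `u(x'|x) = α(x'|x) q(x'|x)` of a Metropolis–Hastings
kernel with proposal density `q(·|x)` and acceptance probability `α(·|x)`.
The first argument is the proposed state `x'`, the second the current state `x`. -/
def mhU {d : ℕ} (q a : (Fin d → ℝ) → (Fin d → ℝ) → ℝ) (x' x : Fin d → ℝ) : ℝ :=
  a x' x * q x' x

/-- The rejection probability `r(x) = 1 − ∫ u(x'|x) dλ(x')`, where `λ` is Lebesgue measure. -/
def mhR {d : ℕ} (q a : (Fin d → ℝ) → (Fin d → ℝ) → ℝ) (x : Fin d → ℝ) : ℝ :=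
  1 - ∫ x', mhU q a x' x

/-- The kernel density `p̂(x'|x)` with respect to the reference measure `λ + δ_x`:
`p̂(x'|x) = u(x'|x)` for `x' ≠ x`, and `p̂(x|x) = r(x)`. -/
def mhPhat {d : ℕ} (q a : (Fin d → ℝ) → (Fin d → ℝ) → ℝ) (x' x : Fin d → ℝ) : ℝ :=
  if x' = x then mhR q a x else mhU q a x' x

/-- The Metropolis–Hastings transition kernel
`κ(x)(A) = ∫_A u(x'|x) dλ(x') + r(x) δ_x(A)`. -/
def mhKernel {d : ℕ} (q a : (Fin d → ℝ) → (Fin d → ℝ) → ℝ) (x : Fin d → ℝ) :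
    Measure (Fin d → ℝ) :=
  volume.withDensity (fun x' => ENNReal.ofReal (mhU q a x' x))
    + ENNReal.ofReal (mhR q a x) • Measure.dirac x

/-- **Proposition 1 (Contrastive divergence lower bound).**
Assuming all integrals below are finite and `P_{n+1} := P_n.bind κ` has a positive density
`p_{n+1}` w.r.t. Lebesgue measure, the contrastive divergence
`Δ_n = D_KL(P_n‖P) − D_KL(P_{n+1}‖P)` satisfies
`Δ_n ≥ E[log (p(X_{n+1}) / (p(X_n) p̂(X_{n+1}|X_n)))] + E[log (p_n(X_n) / (1 + p_n(X_{n+1})))]`,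
where both expectations are over the joint law of `(X_n, X_{n+1})`. -/
theorem contrastive_divergence_lower_bound {d : ℕ} (hd : 0 < d)
    (q a : (Fin d → ℝ) → (Fin d → ℝ) → ℝ)
    (hq_meas : Measurable (Function.uncurry q))
    (hq_nonneg : ∀ x' x, 0 ≤ q x' x)
    (hq_prob : ∀ x, (∫ x', q x' x) = 1)
    (ha_meas : Measurable (Function.uncurry a))
    (ha_mem : ∀ x' x, a x' x ∈ Set.Icc (0 : ℝ) 1)
    (hr_mem : ∀ x, mhR q a x ∈ Set.Icc (0 : ℝ) 1)
    (p : (Fin d → ℝ) → ℝ) (hp_meas : Measurable p) (hp_pos : ∀ x, 0 < p x)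
    (hP_prob : IsProbabilityMeasure (volume.withDensity (fun x => ENNReal.ofReal (p x))))
    (pn : (Fin d → ℝ) → ℝ) (hpn_meas : Measurable pn) (hpn_pos : ∀ x, 0 < pn x)
    (Pn : Measure (Fin d → ℝ))
    (hPn : Pn = volume.withDensity (fun x => ENNReal.ofReal (pn x)))
    (hPn_prob : IsProbabilityMeasure Pn)
    (pn1 : (Fin d → ℝ) → ℝ) (hpn1_meas : Measurable pn1) (hpn1_pos : ∀ x, 0 < pn1 x)
    (hPn1 : Pn.bind (mhKernel q a) = volume.withDensity (fun x => ENNReal.ofReal (pn1 x)))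
    (hI1 : Integrable (fun x => Real.log (pn x / p x)) Pn)
    (hI2 : Integrable (fun x => Real.log (pn1 x / p x)) (Pn.bind (mhKernel q a)))
    (hI3 : ∀ x, Integrable (fun x' => Real.log (p x' / (p x * mhPhat q a x' x)))
      (mhKernel q a x))
    (hI4 : Integrable
      (fun x => ∫ x', Real.log (p x' / (p x * mhPhat q a x' x)) ∂(mhKernel q a x)) Pn)
    (hI5 : ∀ x, Integrable (fun x' => Real.log (pn x / (1 + pn x'))) (mhKernel q a x))
    (hI6 : Integrable
      (fun x => ∫ x', Real.log (pn x / (1 + pn x')) ∂(mhKernel q a x)) Pn) :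
    (∫ x, Real.log (pn x / p x) ∂Pn)
        - (∫ x, Real.log (pn1 x / p x) ∂(Pn.bind (mhKernel q a)))
      ≥ (∫ x, ∫ x', Real.log (p x' / (p x * mhPhat q a x' x)) ∂(mhKernel q a x) ∂Pn)
        + (∫ x, ∫ x', Real.log (pn x / (1 + pn x')) ∂(mhKernel q a x) ∂Pn) := by
  
  classical
  -- basic measurability
  have hu_meas : Measurable fun z : (Fin d → ℝ) × (Fin d → ℝ) => mhU q a z.2 z.1 := by
    have : (fun z : (Fin d → ℝ) × (Fin d → ℝ) => mhU q a z.2 z.1)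
        = fun z => (Function.uncurry a (z.2, z.1)) * (Function.uncurry q (z.2, z.1)) := rfl
    rw [this]
    exact ((ha_meas.comp measurable_swap).mul (hq_meas.comp measurable_swap))
  have hu_nonneg : ∀ x' x, 0 ≤ mhU q a x' x := fun x' x =>
    mul_nonneg (ha_mem x' x).1 (hq_nonneg x' x)
  have hq_int : ∀ x, Integrable (fun x' => q x' x) volume := fun x =>
    integrable_of_integral_eq_one (hq_prob x)
  have hu_meas1 : ∀ x, Measurable fun x' => mhU q a x' x := fun x =>
    (hu_meas.comp measurable_prodMk_left)
  have hu_int : ∀ x, Integrable (fun x' => mhU q a x' x) volume := by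
    intro x
    refine (hq_int x).mono (hu_meas1 x).aestronglyMeasurable ?_
    filter_upwards with x'
    rw [Real.norm_of_nonneg (hu_nonneg x' x), Real.norm_of_nonneg (hq_nonneg x' x)]
    exact mul_le_of_le_one_left (hq_nonneg x' x) (ha_mem x' x).2
  have hr_meas : Measurable (mhR q a) := by
    have : StronglyMeasurable fun x => ∫ x', mhU q a x' x := by
      apply MeasureTheory.StronglyMeasurable.integral_prod_right' (f := fun z => mhU q a z.2 z.1)
      exact hu_meas.stronglyMeasurable
    exact (measurable_const.sub this.measurable)
  have hphat_meas : Measurable fun z : (Fin d → ℝ) × (Fin d → ℝ) => mhPhat q a z.2 z.1 := by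
    unfold mhPhat
    refine Measurable.ite ?_ (hr_meas.comp measurable_fst) hu_meas
    exact measurableSet_eq_fun measurable_snd measurable_fst
  have hphat_nonneg : ∀ x' x, 0 ≤ mhPhat q a x' x := by
    intro x' x
    unfold mhPhat
    split
    · exact (hr_mem x).1
    · exact hu_nonneg x' x
  -- the kernel as a measurable map / Markov kernel
  have hker_meas : Measurable (mhKernel q a) := by
    refine Measure.measurable_of_measurable_coe _ fun s hs => ?_
    have h1 : ∀ x, mhKernel q a x s
        = (∫⁻ x' in s, ENNReal.ofReal (mhU q a x' x) ∂volume) +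
          ENNReal.ofReal (mhR q a x) * s.indicator 1 x := by
      intro x
      simp [mhKernel, withDensity_apply _ hs, Measure.dirac_apply' _ hs]
    simp_rw [h1]
    refine Measurable.add ?_ ?_
    · have hm : Measurable fun z : (Fin d → ℝ) × (Fin d → ℝ) =>
          (Prod.snd ⁻¹' s).indicator
            (fun z : (Fin d → ℝ) × (Fin d → ℝ) => ENNReal.ofReal (mhU q a z.2 z.1)) z :=
        (hu_meas.ennreal_ofReal).indicator (measurable_snd hs)
      have hmm : Measurable fun x : Fin d → ℝ => ∫⁻ y, (Prod.snd ⁻¹' s).indicator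
          (fun z : (Fin d → ℝ) × (Fin d → ℝ) => ENNReal.ofReal (mhU q a z.2 z.1)) (x, y) ∂volume :=
        Measurable.lintegral_prod_right' hm
      have heq : (fun x => ∫⁻ x' in s, ENNReal.ofReal (mhU q a x' x) ∂volume)
          = fun x => ∫⁻ y, (Prod.snd ⁻¹' s).indicator
            (fun z : (Fin d → ℝ) × (Fin d → ℝ) => ENNReal.ofReal (mhU q a z.2 z.1)) (x, y) ∂volume := by
        funext x
        rw [← lintegral_indicator hs]
        refine lintegral_congr fun y => ?_
        by_cases hy : y ∈ s <;> simp [Set.indicator_apply, hy]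
      rw [heq]
      exact hmm
    · exact (hr_meas.ennreal_ofReal).mul (measurable_const.indicator hs)
  have hker_univ : ∀ x, mhKernel q a x Set.univ = 1 := by
    intro x
    have hlintu : (∫⁻ x', ENNReal.ofReal (mhU q a x' x) ∂volume)
        = ENNReal.ofReal (∫ x', mhU q a x' x) :=
      (ofReal_integral_eq_lintegral_ofReal (hu_int x) (Filter.Eventually.of_forall
        fun x' => hu_nonneg x' x)).symm
    have hval : (∫ x', mhU q a x' x) = 1 - mhR q a x := by unfold mhR; ring
    have hr0 := (hr_mem x).1
    have hr1 := (hr_mem x).2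
    simp only [mhKernel, Measure.add_apply, withDensity_apply _ MeasurableSet.univ,
      Measure.smul_apply, Measure.dirac_apply' _ MeasurableSet.univ, Measure.restrict_univ]
    rw [hlintu, hval]
    simp only [Set.indicator_univ, smul_eq_mul, Pi.one_apply, mul_one]
    rw [← ENNReal.ofReal_add (by linarith) hr0]
    norm_num
  -- Kernel packaging
  haveI : Nonempty (Fin d) := ⟨⟨0, hd⟩⟩
  let K : ProbabilityTheory.Kernel (Fin d → ℝ) (Fin d → ℝ) := ⟨mhKernel q a, hker_meas⟩
  have hK_apply : ∀ x, K x = mhKernel q a x := fun _ => rfl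
  haveI hK_markov : ProbabilityTheory.IsMarkovKernel K := ⟨fun x => ⟨hker_univ x⟩⟩
  haveI hprob : ∀ x, IsProbabilityMeasure (mhKernel q a x) := fun x => ⟨hker_univ x⟩
  have hbind_eq : Pn.bind (mhKernel q a) = (Pn.compProd K).snd := by
    ext s hs
    rw [Measure.bind_apply hs hker_meas.aemeasurable, Measure.snd_apply hs,
      Measure.compProd_apply (measurable_snd hs)]
    rfl
  -- the function B
  have hB_meas : Measurable fun x' => Real.log (pn1 x' / p x') :=
    Real.measurable_log.comp (hpn1_meas.div hp_meas)
  have hB2 : Integrable (fun z : (Fin d → ℝ) × (Fin d → ℝ) => Real.log (pn1 z.2 / p z.2))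
      (Pn.compProd K) := by
    have h2 := hI2
    rw [hbind_eq] at h2
    have : Measure.snd (Pn.compProd K) = (Pn.compProd K).map Prod.snd := rfl
    rw [this] at h2
    exact (integrable_map_measure hB_meas.aestronglyMeasurable
      measurable_snd.aemeasurable).mp h2
  have hBsplit := (Measure.integrable_compProd_iff
    (hB_meas.comp measurable_snd).aestronglyMeasurable).mp hB2
  have hBae : ∀ᵐ x ∂Pn, Integrable (fun x' => Real.log (pn1 x' / p x')) (mhKernel q a x) :=
    hBsplit.1
  have hBout : Integrable (fun x => ∫ x', Real.log (pn1 x' / p x') ∂(mhKernel q a x)) Pn := by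
    refine hBsplit.2.mono ?_ ?_
    · exact (MeasureTheory.StronglyMeasurable.integral_kernel_prod_right
        (κ := K) (f := fun _ x' => Real.log (pn1 x' / p x'))
        (hB_meas.comp measurable_snd).stronglyMeasurable).aestronglyMeasurable
    · filter_upwards with x
      rw [Real.norm_of_nonneg (integral_nonneg fun x' => norm_nonneg _)]
      exact norm_integral_le_integral_norm _
  have hBconv : (∫ x, Real.log (pn1 x / p x) ∂(Pn.bind (mhKernel q a)))
      = ∫ x, ∫ x', Real.log (pn1 x' / p x') ∂(mhKernel q a x) ∂Pn := by
    rw [hbind_eq]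
    have h1 : Measure.snd (Pn.compProd K) = (Pn.compProd K).map Prod.snd := rfl
    rw [h1, integral_map measurable_snd.aemeasurable hB_meas.aestronglyMeasurable,
      Measure.integral_compProd hB2]
    rfl
  have hAconv : (∫ x, Real.log (pn x / p x) ∂Pn)
      = ∫ x, ∫ x', Real.log (pn x / p x) ∂(mhKernel q a x) ∂Pn := by
    refine integral_congr_ae (Filter.Eventually.of_forall fun x => ?_)
    haveI := hprob x
    simp [integral_const]
  -- the comparison function g and its kernel lintegral L
  have h1pn : ∀ x' : Fin d → ℝ, (0:ℝ) < 1 + pn x' := fun x' => by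
    have := hpn_pos x'; linarith
  have hphat_diag : ∀ x, mhPhat q a x x = mhR q a x := fun x => if_pos rfl
  have hphat_off : ∀ x' x, x' ≠ x → mhPhat q a x' x = mhU q a x' x := fun x' x h => if_neg h
  have hne_vol : ∀ x : Fin d → ℝ, ∀ᵐ x' ∂(volume : Measure (Fin d → ℝ)), x' ≠ x := by
    intro x
    rw [ae_iff]
    have h : {x' : Fin d → ℝ | ¬x' ≠ x} = {x} := by ext x'; simp
    rw [h]
    exact measure_singleton x
  obtain ⟨g, hg⟩ : ∃ g : (Fin d → ℝ) → (Fin d → ℝ) → ℝ,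
      g = fun x x' => pn1 x' / (mhPhat q a x' x * (1 + pn x')) := ⟨_, rfl⟩
  have hg_nonneg : ∀ x x', 0 ≤ g x x' := by
    intro x x'
    rw [hg]
    have h1 := hphat_nonneg x' x
    have h2 := (hpn1_pos x').le
    have h3 := (h1pn x').le
    positivity
  have hg_measR : Measurable fun z : (Fin d → ℝ) × (Fin d → ℝ) => g z.1 z.2 := by
    rw [hg]
    exact (hpn1_meas.comp measurable_snd).div
      (hphat_meas.mul (measurable_const.add (hpn_meas.comp measurable_snd)))
  have hg_measU : Measurable fun z : (Fin d → ℝ) × (Fin d → ℝ) =>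
      ENNReal.ofReal (g z.1 z.2) := hg_measR.ennreal_ofReal
  obtain ⟨L, hL⟩ : ∃ L : (Fin d → ℝ) → ℝ≥0∞,
      L = fun x => ∫⁻ x', ENNReal.ofReal (g x x') ∂(mhKernel q a x) := ⟨_, rfl⟩
  have hL_meas : Measurable L := by
    rw [hL]
    exact Measurable.lintegral_kernel_prod_right (κ := K) hg_measU
  have hL_eq : ∀ x, L x
      = (∫⁻ x', ENNReal.ofReal (mhU q a x' x) * ENNReal.ofReal (g x x') ∂volume)
        + ENNReal.ofReal (mhR q a x) * ENNReal.ofReal (g x x) := by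
    intro x
    rw [hL]
    show (∫⁻ x', ENNReal.ofReal (g x x') ∂(mhKernel q a x)) = _
    unfold mhKernel
    have hmf : Measurable fun x' => ENNReal.ofReal (mhU q a x' x) :=
      (hu_meas.comp measurable_prodMk_left).ennreal_ofReal
    have hmg : Measurable fun x' => ENNReal.ofReal (g x x') :=
      hg_measU.comp measurable_prodMk_left
    rw [lintegral_add_measure, lintegral_smul_measure, lintegral_dirac,
      lintegral_withDensity_eq_lintegral_mul _ hmf hmg]
    rfl
  have hpn1_one : (∫⁻ x, ENNReal.ofReal (pn1 x) ∂volume) = 1 := by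
    have h1 : (volume.withDensity fun x => ENNReal.ofReal (pn1 x)) Set.univ = 1 := by
      rw [← hPn1, Measure.bind_apply MeasurableSet.univ hker_meas.aemeasurable]
      rw [lintegral_congr fun x => hker_univ x]
      simp
    rwa [withDensity_apply _ MeasurableSet.univ, Measure.restrict_univ] at h1
  have hc_le : (∫⁻ x', ENNReal.ofReal (pn1 x' / (1 + pn x')) ∂volume) ≤ 1 := by
    refine le_trans (lintegral_mono fun x' => ENNReal.ofReal_le_ofReal ?_) hpn1_one.le
    exact div_le_self (hpn1_pos x').le (by have := hpn_pos x'; linarith)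
  have hpart1 : ∀ x, (∫⁻ x', ENNReal.ofReal (mhU q a x' x) * ENNReal.ofReal (g x x') ∂volume)
      ≤ ∫⁻ x', ENNReal.ofReal (pn1 x' / (1 + pn x')) ∂volume := by
    intro x
    refine lintegral_mono_ae ?_
    filter_upwards [hne_vol x] with x' hx'
    by_cases hu0 : mhU q a x' x = 0
    · simp [hu0]
    · simp only [hg]
      rw [← ENNReal.ofReal_mul (hu_nonneg x' x)]
      refine ENNReal.ofReal_le_ofReal (le_of_eq ?_)
      rw [hphat_off x' x hx']
      have h2 := (h1pn x').ne'
      field_simp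
  have hpart2 : ∀ x, ENNReal.ofReal (mhR q a x) * ENNReal.ofReal (g x x)
      ≤ ENNReal.ofReal (pn1 x / (1 + pn x)) := by
    intro x
    by_cases hr0 : mhR q a x = 0
    · simp [hr0]
    · simp only [hg]
      rw [← ENNReal.ofReal_mul (hr_mem x).1]
      refine ENNReal.ofReal_le_ofReal (le_of_eq ?_)
      rw [hphat_diag x]
      have h2 := (h1pn x).ne'
      field_simp
  have hL_le : ∀ x, L x ≤ (∫⁻ x', ENNReal.ofReal (pn1 x' / (1 + pn x')) ∂volume)
      + ENNReal.ofReal (pn1 x / (1 + pn x)) := fun x => by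
    rw [hL_eq x]; exact add_le_add (hpart1 x) (hpart2 x)
  have hL_fin : ∀ x, L x < ⊤ := by
    intro x
    refine lt_of_le_of_lt (hL_le x) ?_
    exact ENNReal.add_lt_top.mpr ⟨lt_of_le_of_lt hc_le ENNReal.one_lt_top, ENNReal.ofReal_lt_top⟩
  have hLint_le : (∫⁻ x, L x ∂Pn) ≤ 1 := by
    have hmeas2 : Measurable fun x => ENNReal.ofReal (pn1 x / (1 + pn x)) :=
      (hpn1_meas.div (measurable_const.add hpn_meas)).ennreal_ofReal
    calc (∫⁻ x, L x ∂Pn)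
        ≤ ∫⁻ x, ((∫⁻ x', ENNReal.ofReal (pn1 x' / (1 + pn x')) ∂volume)
            + ENNReal.ofReal (pn1 x / (1 + pn x))) ∂Pn := lintegral_mono hL_le
      _ = (∫⁻ x', ENNReal.ofReal (pn1 x' / (1 + pn x')) ∂volume)
            + ∫⁻ x, ENNReal.ofReal (pn1 x / (1 + pn x)) ∂Pn := by
          rw [lintegral_add_left measurable_const, lintegral_const, measure_univ, mul_one]
      _ = (∫⁻ x', ENNReal.ofReal (pn1 x' / (1 + pn x')) ∂volume)
            + ∫⁻ x, ENNReal.ofReal (pn x) * ENNReal.ofReal (pn1 x / (1 + pn x)) ∂volume := by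
          rw [hPn, lintegral_withDensity_eq_lintegral_mul _ hpn_meas.ennreal_ofReal hmeas2]
          rfl
      _ = ∫⁻ x, (ENNReal.ofReal (pn1 x / (1 + pn x))
            + ENNReal.ofReal (pn x) * ENNReal.ofReal (pn1 x / (1 + pn x))) ∂volume := by
          rw [lintegral_add_left hmeas2]
      _ = ∫⁻ x, ENNReal.ofReal (pn1 x) ∂volume := by
          refine lintegral_congr fun x => ?_
          rw [← ENNReal.ofReal_mul (hpn_pos x).le,
            ← ENNReal.ofReal_add (div_nonneg (hpn1_pos x).le (h1pn x).le)
              (mul_nonneg (hpn_pos x).le (div_nonneg (hpn1_pos x).le (h1pn x).le))]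
          congr 1
          have h2 := (h1pn x).ne'
          field_simp
      _ = 1 := hpn1_one
  have hG_int : ∀ x, Integrable (fun x' => g x x') (mhKernel q a x) := by
    intro x
    refine ⟨(hg_measR.comp measurable_prodMk_left).aestronglyMeasurable, ?_⟩
    rw [hasFiniteIntegral_iff_ofReal (Filter.Eventually.of_forall fun x' => hg_nonneg x x')]
    have := hL_fin x
    rw [hL] at this
    exact this
  have hG_eq : ∀ x, (∫ x', g x x' ∂(mhKernel q a x)) = (L x).toReal := by
    intro x
    rw [integral_eq_lintegral_of_nonneg_ae (Filter.Eventually.of_forall fun x' => hg_nonneg x x')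
      (hg_measR.comp measurable_prodMk_left).aestronglyMeasurable, hL]
  have hphat_ae : ∀ x, ∀ᵐ x' ∂(mhKernel q a x), mhPhat q a x' x ≠ 0 := by
    intro x
    have hm1 : Measurable fun x' => mhPhat q a x' x := hphat_meas.comp measurable_prodMk_left
    have hSm : MeasurableSet {x' | mhPhat q a x' x = 0} := hm1 (measurableSet_singleton 0)
    rw [ae_iff]
    have hset : {x' | ¬mhPhat q a x' x ≠ 0} = {x' | mhPhat q a x' x = 0} := by ext x'; simp
    rw [hset]
    show mhKernel q a x {x' | mhPhat q a x' x = 0} = 0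
    unfold mhKernel
    rw [Measure.add_apply, withDensity_apply _ hSm, Measure.smul_apply, smul_eq_mul]
    have h1 : (∫⁻ x' in {x' | mhPhat q a x' x = 0}, ENNReal.ofReal (mhU q a x' x) ∂volume)
        = 0 := by
      have hz : ∀ᵐ x' ∂(volume.restrict {x' | mhPhat q a x' x = 0}),
          ENNReal.ofReal (mhU q a x' x) = 0 := by
        filter_upwards [ae_restrict_mem hSm, ae_restrict_of_ae (hne_vol x)] with x' hmem hne
        have h3 : mhPhat q a x' x = mhU q a x' x := hphat_off x' x hne
        have h4 : mhPhat q a x' x = 0 := hmem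
        rw [← h3, h4]
        simp
      rw [lintegral_congr_ae hz, lintegral_zero]
    have h2 : ENNReal.ofReal (mhR q a x) * (Measure.dirac x) {x' | mhPhat q a x' x = 0} = 0 := by
      by_cases hx : mhPhat q a x x = 0
      · have hr0 : mhR q a x = 0 := by rw [← hphat_diag x]; exact hx
        simp [hr0]
      · rw [Measure.dirac_apply' _ hSm]
        have hnotmem : x ∉ {x' | mhPhat q a x' x = 0} := hx
        simp [Set.indicator_of_notMem hnotmem]
    rw [h1, h2, zero_add]
  -- inner inequality
  have hinner : ∀ x, Integrable (fun x' => Real.log (pn1 x' / p x')) (mhKernel q a x) →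
      (∫ x', Real.log (p x' / (p x * mhPhat q a x' x)) ∂(mhKernel q a x))
        + (∫ x', Real.log (pn x / (1 + pn x')) ∂(mhKernel q a x))
        + (∫ x', Real.log (pn1 x' / p x') ∂(mhKernel q a x))
        - Real.log (pn x / p x)
      ≤ (L x).toReal - 1 := by
    intro x hBx
    haveI := hprob x
    have hsum : (∫ x', Real.log (p x' / (p x * mhPhat q a x' x)) ∂(mhKernel q a x))
        + (∫ x', Real.log (pn x / (1 + pn x')) ∂(mhKernel q a x))
        + (∫ x', Real.log (pn1 x' / p x') ∂(mhKernel q a x))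
        - Real.log (pn x / p x)
        = ∫ x', (Real.log (p x' / (p x * mhPhat q a x' x))
            + Real.log (pn x / (1 + pn x'))
            + Real.log (pn1 x' / p x')
            - Real.log (pn x / p x)) ∂(mhKernel q a x) := by
      have hadd1 : Integrable (fun x' => Real.log (p x' / (p x * mhPhat q a x' x))
          + Real.log (pn x / (1 + pn x'))) (mhKernel q a x) := (hI3 x).add (hI5 x)
      have hadd2 : Integrable (fun x' => Real.log (p x' / (p x * mhPhat q a x' x))
          + Real.log (pn x / (1 + pn x')) + Real.log (pn1 x' / p x')) (mhKernel q a x) :=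
        hadd1.add hBx
      rw [integral_sub hadd2 (integrable_const _),
        integral_add hadd1 hBx, integral_add (hI3 x) (hI5 x),
        integral_const]
      simp [measure_univ]
    rw [hsum]
    have hle2 : (∫ x', (g x x' - 1) ∂(mhKernel q a x)) = (L x).toReal - 1 := by
      rw [integral_sub (hG_int x) (integrable_const _), integral_const, hG_eq x]
      simp [measure_univ]
    rw [← hle2]
    have hadd2 : Integrable (fun x' => Real.log (p x' / (p x * mhPhat q a x' x))
        + Real.log (pn x / (1 + pn x')) + Real.log (pn1 x' / p x')) (mhKernel q a x) :=
      ((hI3 x).add (hI5 x)).add hBx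
    have hsub3 : Integrable (fun x' => Real.log (p x' / (p x * mhPhat q a x' x))
        + Real.log (pn x / (1 + pn x')) + Real.log (pn1 x' / p x')
        - Real.log (pn x / p x)) (mhKernel q a x) := hadd2.sub (integrable_const _)
    have hsub4 : Integrable (fun x' => g x x' - 1) (mhKernel q a x) :=
      (hG_int x).sub (integrable_const _)
    refine integral_mono_ae hsub3 hsub4 ?_
    filter_upwards [hphat_ae x] with x' hph
    have hphp : 0 < mhPhat q a x' x := lt_of_le_of_ne (hphat_nonneg x' x) (Ne.symm hph)
    have hgpos : 0 < g x x' := by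
      simp only [hg]
      exact div_pos (hpn1_pos x') (mul_pos hphp (h1pn x'))
    have heq : Real.log (p x' / (p x * mhPhat q a x' x)) + Real.log (pn x / (1 + pn x'))
        + Real.log (pn1 x' / p x') - Real.log (pn x / p x) = Real.log (g x x') := by
      simp only [hg]
      rw [Real.log_div (hp_pos x').ne' (mul_pos (hp_pos x) hphp).ne',
        Real.log_mul (hp_pos x).ne' hph,
        Real.log_div (hpn_pos x).ne' (h1pn x').ne',
        Real.log_div (hpn1_pos x').ne' (hp_pos x').ne',
        Real.log_div (hpn_pos x).ne' (hp_pos x).ne',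
        Real.log_div (hpn1_pos x').ne' (mul_pos hphp (h1pn x')).ne',
        Real.log_mul hph (h1pn x').ne']
      ring
    show Real.log (p x' / (p x * mhPhat q a x' x)) + Real.log (pn x / (1 + pn x'))
        + Real.log (pn1 x' / p x') - Real.log (pn x / p x) ≤ g x x' - 1
    rw [heq]
    exact Real.log_le_sub_one_of_pos hgpos
  -- outer inequality and assembly
  have hLto_int : Integrable (fun x => (L x).toReal) Pn :=
    integrable_toReal_of_lintegral_ne_top hL_meas.aemeasurable
      (lt_of_le_of_lt hLint_le ENNReal.one_lt_top).ne
  have houter : (∫ x, ((∫ x', Real.log (p x' / (p x * mhPhat q a x' x)) ∂(mhKernel q a x))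
      + (∫ x', Real.log (pn x / (1 + pn x')) ∂(mhKernel q a x))
      + (∫ x', Real.log (pn1 x' / p x') ∂(mhKernel q a x))
      - Real.log (pn x / p x)) ∂Pn)
      ≤ ∫ x, ((L x).toReal - 1) ∂Pn := by
    have hadd5 : Integrable (fun x => (∫ x', Real.log (p x' / (p x * mhPhat q a x' x))
        ∂(mhKernel q a x)) + (∫ x', Real.log (pn x / (1 + pn x')) ∂(mhKernel q a x))
        + (∫ x', Real.log (pn1 x' / p x') ∂(mhKernel q a x))) Pn := (hI4.add hI6).add hBout
    have hsub5 : Integrable (fun x => (∫ x', Real.log (p x' / (p x * mhPhat q a x' x))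
        ∂(mhKernel q a x)) + (∫ x', Real.log (pn x / (1 + pn x')) ∂(mhKernel q a x))
        + (∫ x', Real.log (pn1 x' / p x') ∂(mhKernel q a x))
        - Real.log (pn x / p x)) Pn := hadd5.sub hI1
    have hsub6 : Integrable (fun x => (L x).toReal - 1) Pn :=
      hLto_int.sub (integrable_const _)
    refine integral_mono_ae hsub5 hsub6 ?_
    filter_upwards [hBae] with x hBx using hinner x hBx
  have hRHSval : (∫ x, ((L x).toReal - 1) ∂Pn) ≤ 0 := by
    rw [integral_sub hLto_int (integrable_const _), integral_const]
    have hval : (∫ x, (L x).toReal ∂Pn) = (∫⁻ x, L x ∂Pn).toReal :=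
      integral_toReal hL_meas.aemeasurable (Filter.Eventually.of_forall hL_fin)
    have h1 : (∫⁻ x, L x ∂Pn).toReal ≤ 1 := by
      calc (∫⁻ x, L x ∂Pn).toReal ≤ (1:ℝ≥0∞).toReal :=
            ENNReal.toReal_mono ENNReal.one_ne_top hLint_le
        _ = 1 := by simp
    rw [hval]
    simp only [measure_univ, ENNReal.toReal_one, smul_eq_mul, one_mul, probReal_univ, mul_one]
    linarith
  have hsplit : (∫ x, ((∫ x', Real.log (p x' / (p x * mhPhat q a x' x)) ∂(mhKernel q a x))
      + (∫ x', Real.log (pn x / (1 + pn x')) ∂(mhKernel q a x))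
      + (∫ x', Real.log (pn1 x' / p x') ∂(mhKernel q a x))
      - Real.log (pn x / p x)) ∂Pn)
      = (∫ x, ∫ x', Real.log (p x' / (p x * mhPhat q a x' x)) ∂(mhKernel q a x) ∂Pn)
      + (∫ x, ∫ x', Real.log (pn x / (1 + pn x')) ∂(mhKernel q a x) ∂Pn)
      + (∫ x, ∫ x', Real.log (pn1 x' / p x') ∂(mhKernel q a x) ∂Pn)
      - (∫ x, Real.log (pn x / p x) ∂Pn) := by
    have hadd7 : Integrable (fun x => (∫ x', Real.log (p x' / (p x * mhPhat q a x' x))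
        ∂(mhKernel q a x)) + (∫ x', Real.log (pn x / (1 + pn x')) ∂(mhKernel q a x))) Pn :=
      hI4.add hI6
    have hadd8 : Integrable (fun x => (∫ x', Real.log (p x' / (p x * mhPhat q a x' x))
        ∂(mhKernel q a x)) + (∫ x', Real.log (pn x / (1 + pn x')) ∂(mhKernel q a x))
        + (∫ x', Real.log (pn1 x' / p x') ∂(mhKernel q a x))) Pn := hadd7.add hBout
    rw [integral_sub hadd8 hI1, integral_add hadd7 hBout, integral_add hI4 hI6]
  rw [ge_iff_le, hBconv]
  linarith [houter, hRHSval, hsplit]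
end
end

section
/- Lower bound for the exploration term (Proposition 2): Assume all integrals appearing below are finite. Then E[ −log p̂(X_{n+1}|X_n) ] ≥ E[ −(1 − α(X*_{n+1}|X_n)) log(1 − α(X*_{n+1}|X_n)) − α(X*_{n+1}|X_n) ( log q(X*_{n+1}|X_n) + log α(X*_{n+1}|X_n) ) ], where the left-hand expectation is over the joint law of (X_n, X_{n+1}), i.e. ∫∫ (·) κ(x)(dx') P_n(dx), and the right-hand expectation is over the joint law of (X_n, X*_{n+1}), i.e. ∫∫ (·) q(x'|x) λ(dx') P_n(dx). -/
open MeasureTheory ENNReal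

noncomputable section

lemma my_negMulLog_le_one {t : ℝ} (h0 : 0 ≤ t) : Real.negMulLog t ≤ 1 := by
  rcases eq_or_lt_of_le h0 with h | h
  · simp [← h]
  · have hlog : Real.log t⁻¹ ≤ t⁻¹ - 1 := Real.log_le_sub_one_of_pos (by positivity)
    rw [Real.log_inv] at hlog
    have h2 : t * (-Real.log t) ≤ t * (t⁻¹ - 1) := mul_le_mul_of_nonneg_left hlog h0
    have ht : t * (t⁻¹ - 1) = 1 - t := by field_simp
    rw [ht] at h2
    unfold Real.negMulLog
    nlinarith

/-- The key pointwise (in the current state `x`) inequality. -/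
lemma mh_inner_le {d : ℕ} (hd : 0 < d)
    (q a : (Fin d → ℝ) → (Fin d → ℝ) → ℝ)
    (hq_meas : Measurable (Function.uncurry q))
    (hq_nonneg : ∀ x' x, 0 ≤ q x' x)
    (hq_prob : ∀ x, (∫ x', q x' x) = 1)
    (ha_meas : Measurable (Function.uncurry a))
    (ha_mem : ∀ x' x, a x' x ∈ Set.Icc (0 : ℝ) 1)
    (hr_mem : ∀ x, mhR q a x ∈ Set.Icc (0 : ℝ) 1)
    (x : Fin d → ℝ)
    (hI1x : Integrable (fun x' => Real.log (mhPhat q a x' x)) (mhKernel q a x))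
    (hI3x : Integrable (fun x' =>
      (-( (1 - a x' x) * Real.log (1 - a x' x))
        - a x' x * (Real.log (q x' x) + Real.log (a x' x))) * q x' x)) :
    (∫ x', (-( (1 - a x' x) * Real.log (1 - a x' x))
        - a x' x * (Real.log (q x' x) + Real.log (a x' x))) * q x' x)
      ≤ ∫ x', (- Real.log (mhPhat q a x' x)) ∂(mhKernel q a x) := by
  haveI : Nonempty (Fin d) := Fin.pos_iff_nonempty.mp hd
  -- measurability for fixed x
  have hq_m : Measurable (fun x' => q x' x) :=
    hq_meas.comp (measurable_id.prodMk measurable_const)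
  have ha_m : Measurable (fun x' => a x' x) :=
    ha_meas.comp (measurable_id.prodMk measurable_const)
  have hu_m : Measurable (fun x' => mhU q a x' x) := ha_m.mul hq_m
  have hu_nonneg : ∀ x', 0 ≤ mhU q a x' x :=
    fun x' => mul_nonneg (ha_mem x' x).1 (hq_nonneg x' x)
  -- integrability of q(·|x)
  have hq_int : Integrable (fun x' => q x' x) := by
    by_contra h
    have := hq_prob x
    rw [integral_undef h] at this
    norm_num at this
  have hu_int : Integrable (fun x' => mhU q a x' x) := by
    refine hq_int.mono hu_m.aestronglyMeasurable (Filter.Eventually.of_forall fun x' => ?_)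
    rw [Real.norm_eq_abs, Real.norm_eq_abs, abs_of_nonneg (hu_nonneg x'),
      abs_of_nonneg (hq_nonneg x' x)]
    unfold mhU
    nlinarith [hq_nonneg x' x, (ha_mem x' x).1, (ha_mem x' x).2]
  -- rejection prob as an integral
  have hr_eq : mhR q a x = ∫ x', (1 - a x' x) * q x' x := by
    unfold mhR
    have : (fun x' => (1 - a x' x) * q x' x)
        = fun x' => q x' x - mhU q a x' x := by
      ext x'; unfold mhU; ring
    rw [this, integral_sub hq_int hu_int, hq_prob x]
  -- generic conversion for integrals w.r.t. withDensity of a nonneg density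
  have hconv : ∀ (f : (Fin d → ℝ) → ℝ), Measurable f → (∀ x', 0 ≤ f x') →
      ∀ (g : (Fin d → ℝ) → ℝ),
      ∫ x', g x' ∂(volume.withDensity (fun x' => ENNReal.ofReal (f x')))
        = ∫ x', f x' * g x' := by
    intro f hf hf0 g
    have h : (fun x' => ENNReal.ofReal (f x'))
        = (fun x' => (((f x').toNNReal : NNReal) : ℝ≥0∞)) := rfl
    rw [h, integral_withDensity_eq_integral_smul (hf.real_toNNReal) g]
    congr 1; ext x'
    rw [NNReal.smul_def, Real.coe_toNNReal _ (hf0 x'), smul_eq_mul]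
  -- the proposal measure
  set μq : Measure (Fin d → ℝ) :=
    volume.withDensity (fun x' => ENNReal.ofReal (q x' x)) with hμq
  have hμq_prob : IsProbabilityMeasure μq := by
    constructor
    rw [hμq, withDensity_apply _ MeasurableSet.univ, Measure.restrict_univ,
      ← MeasureTheory.ofReal_integral_eq_lintegral_ofReal hq_int
        (Filter.Eventually.of_forall fun x' => hq_nonneg x' x),
      hq_prob x]
    simp
  -- Jensen's inequality
  have hconc : ConcaveOn ℝ (Set.Icc (0:ℝ) 1) Real.negMulLog :=
    Real.concaveOn_negMulLog.subset Set.Icc_subset_Ici_self (convex_Icc 0 1)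
  have hmem : ∀ x', (1 - a x' x) ∈ Set.Icc (0:ℝ) 1 := fun x' =>
    ⟨by linarith [(ha_mem x' x).2], by linarith [(ha_mem x' x).1]⟩
  have hfi : Integrable (fun x' => 1 - a x' x) μq := by
    refine (integrable_const (1:ℝ)).mono
      ((measurable_const.sub ha_m).aestronglyMeasurable)
      (Filter.Eventually.of_forall fun x' => ?_)
    rw [Real.norm_eq_abs, Real.norm_eq_abs, abs_one]
    exact abs_le.mpr ⟨by linarith [(ha_mem x' x).2], by linarith [(ha_mem x' x).1]⟩
  have hgi : Integrable (Real.negMulLog ∘ (fun x' => 1 - a x' x)) μq := by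
    refine (integrable_const (1:ℝ)).mono
      ((Real.continuous_negMulLog.measurable.comp
        (measurable_const.sub ha_m)).aestronglyMeasurable)
      (Filter.Eventually.of_forall fun x' => ?_)
    rw [Real.norm_eq_abs, Real.norm_eq_abs, abs_one, Function.comp_apply,
      abs_of_nonneg (Real.negMulLog_nonneg (hmem x').1 (hmem x').2)]
    exact my_negMulLog_le_one (hmem x').1
  have hjen : (∫ x', Real.negMulLog (1 - a x' x) ∂μq)
      ≤ Real.negMulLog (∫ x', (1 - a x' x) ∂μq) :=
    hconc.le_map_integral (Real.continuous_negMulLog.continuousOn) isClosed_Icc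
      (Filter.Eventually.of_forall hmem) hfi hgi
  have hμint1 : (∫ x', (1 - a x' x) ∂μq) = mhR q a x := by
    rw [hμq, hconv _ hq_m (fun x' => hq_nonneg x' x), hr_eq]
    congr 1; ext x'; ring
  have hμint2 : (∫ x', Real.negMulLog (1 - a x' x) ∂μq)
      = ∫ x', q x' x * Real.negMulLog (1 - a x' x) :=
    hconv _ hq_m (fun x' => hq_nonneg x' x) _
  rw [hμint1, hμint2] at hjen
  -- pointwise algebraic identity for the RHS integrand
  have hpt : ∀ x', (-( (1 - a x' x) * Real.log (1 - a x' x))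
        - a x' x * (Real.log (q x' x) + Real.log (a x' x))) * q x' x
      = q x' x * Real.negMulLog (1 - a x' x)
        + mhU q a x' x * (- Real.log (mhU q a x' x)) := by
    intro x'
    unfold mhU Real.negMulLog
    rcases eq_or_lt_of_le (hq_nonneg x' x) with hq0 | hq0
    · rw [← hq0]; simp
    · rcases eq_or_lt_of_le (ha_mem x' x).1 with ha0 | ha0
      · rw [← ha0]; simp
      · rw [Real.log_mul (ne_of_gt ha0) (ne_of_gt hq0)]; ring
  -- integrability of the two pieces
  have hB : Integrable (fun x' => q x' x * Real.negMulLog (1 - a x' x)) := by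
    refine hq_int.mono ((hq_m.mul (Real.continuous_negMulLog.measurable.comp
      (measurable_const.sub ha_m))).aestronglyMeasurable)
      (Filter.Eventually.of_forall fun x' => ?_)
    have h0 := Real.negMulLog_nonneg (hmem x').1 (hmem x').2
    have h1 := my_negMulLog_le_one (hmem x').1
    rw [Real.norm_eq_abs, Real.norm_eq_abs,
      abs_of_nonneg (mul_nonneg (hq_nonneg x' x) h0), abs_of_nonneg (hq_nonneg x' x)]
    nlinarith [hq_nonneg x' x]
  have hA : Integrable (fun x' => mhU q a x' x * (- Real.log (mhU q a x' x))) := by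
    have := hI3x.sub hB
    refine this.congr (Filter.Eventually.of_forall fun x' => ?_)
    simp only [Pi.sub_apply]
    rw [hpt x']; ring
  -- split the RHS integral
  have hsplit : (∫ x', (-( (1 - a x' x) * Real.log (1 - a x' x))
        - a x' x * (Real.log (q x' x) + Real.log (a x' x))) * q x' x)
      = (∫ x', q x' x * Real.negMulLog (1 - a x' x))
        + ∫ x', mhU q a x' x * (- Real.log (mhU q a x' x)) := by
    rw [← integral_add hB hA]
    exact integral_congr_ae (Filter.Eventually.of_forall hpt)
  -- compute the LHS (kernel) integral
  have hsing : (volume : Measure (Fin d → ℝ)) {x} = 0 := by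
    rw [MeasureTheory.volume_pi]
    exact measure_singleton x
  have hae : ∀ᵐ x' ∂(volume : Measure (Fin d → ℝ)), x' ≠ x := by
    rw [ae_iff]
    convert hsing using 2
    ext x'; simp
  have hI1' : Integrable (fun x' => - Real.log (mhPhat q a x' x)) (mhKernel q a x) :=
    hI1x.neg
  have hker : mhKernel q a x
      = volume.withDensity (fun x' => ENNReal.ofReal (mhU q a x' x))
        + ENNReal.ofReal (mhR q a x) • Measure.dirac x := rfl
  obtain ⟨h1, h2⟩ := integrable_add_measure.mp (hker ▸ hI1')
  have hlhs : (∫ x', (- Real.log (mhPhat q a x' x)) ∂(mhKernel q a x))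
      = (∫ x', mhU q a x' x * (- Real.log (mhU q a x' x)))
        + Real.negMulLog (mhR q a x) := by
    rw [hker, integral_add_measure h1 h2]
    congr 1
    · rw [hconv _ hu_m hu_nonneg]
      refine integral_congr_ae ?_
      filter_upwards [hae] with x' hx'
      rw [show mhPhat q a x' x = mhU q a x' x from if_neg hx']
    · rw [integral_smul_measure, integral_dirac,
        ENNReal.toReal_ofReal (hr_mem x).1,
        show mhPhat q a x x = mhR q a x from if_pos rfl]
      unfold Real.negMulLog
      rw [smul_eq_mul]; ring
  rw [hlhs, hsplit]
  linarith [hjen]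


/-- **Proposition 2 (Lower bound for the exploration term).**
Assuming all integrals below are finite,
`E[−log p̂(X_{n+1}|X_n)] ≥ E[−(1−α(X*|X_n)) log(1−α(X*|X_n))
  − α(X*|X_n)(log q(X*|X_n) + log α(X*|X_n))]`,
where the left expectation is over the joint law of `(X_n, X_{n+1})` (current state and next
state of the chain) and the right expectation is over the joint law of `(X_n, X*_{n+1})`
(current state and proposal, which has density `q(·|X_n)`). -/
theorem exploration_term_lower_bound {d : ℕ} (hd : 0 < d)
    (q a : (Fin d → ℝ) → (Fin d → ℝ) → ℝ)
    (hq_meas : Measurable (Function.uncurry q))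
    (hq_nonneg : ∀ x' x, 0 ≤ q x' x)
    (hq_prob : ∀ x, (∫ x', q x' x) = 1)
    (ha_meas : Measurable (Function.uncurry a))
    (ha_mem : ∀ x' x, a x' x ∈ Set.Icc (0 : ℝ) 1)
    (hr_mem : ∀ x, mhR q a x ∈ Set.Icc (0 : ℝ) 1)
    (pn : (Fin d → ℝ) → ℝ) (hpn_meas : Measurable pn) (hpn_pos : ∀ x, 0 < pn x)
    (Pn : Measure (Fin d → ℝ))
    (hPn : Pn = volume.withDensity (fun x => ENNReal.ofReal (pn x)))
    (hPn_prob : IsProbabilityMeasure Pn)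
    (hI1 : ∀ x, Integrable (fun x' => Real.log (mhPhat q a x' x)) (mhKernel q a x))
    (hI2 : Integrable
      (fun x => ∫ x', (- Real.log (mhPhat q a x' x)) ∂(mhKernel q a x)) Pn)
    (hI3 : ∀ x, Integrable (fun x' =>
      (-( (1 - a x' x) * Real.log (1 - a x' x))
        - a x' x * (Real.log (q x' x) + Real.log (a x' x))) * q x' x))
    (hI4 : Integrable (fun x => ∫ x',
      (-( (1 - a x' x) * Real.log (1 - a x' x))
        - a x' x * (Real.log (q x' x) + Real.log (a x' x))) * q x' x) Pn) :
    (∫ x, ∫ x', (- Real.log (mhPhat q a x' x)) ∂(mhKernel q a x) ∂Pn)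
      ≥ ∫ x, (∫ x',
          (-( (1 - a x' x) * Real.log (1 - a x' x))
            - a x' x * (Real.log (q x' x) + Real.log (a x' x))) * q x' x) ∂Pn := by
  refine integral_mono hI4 hI2 fun x => ?_
  exact mh_inner_le hd q a hq_meas hq_nonneg hq_prob ha_meas ha_mem hr_mem x
    (hI1 x) (hI3 x)
end
end

section
/- Density recursion for the Metropolis–Hastings chain: If P_n = λ.withDensity(p_n) is a probability measure with measurable nonnegative density p_n, and u is jointly measurable and nonnegative, then P_{n+1} := P_n.bind κ has density with respect to λ given λ-almost everywhere by p_{n+1}(x) = r(x) p_n(x) + ∫ u(x|x') p_n(x') dλ(x'); that is, P_{n+1} = λ.withDensity( x ↦ r(x) p_n(x) + ∫ u(x|x') p_n(x') dλ(x') ). -/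
open MeasureTheory ENNReal

noncomputable section

/-- **Density recursion for the Metropolis–Hastings chain.**
If `P_n = λ.withDensity p_n` is a probability measure with measurable nonnegative density
`p_n`, and `u` is jointly measurable and nonnegative, then `P_{n+1} := P_n.bind κ` has
`λ`-density `p_{n+1}(x) = r(x) p_n(x) + ∫ u(x|x') p_n(x') dλ(x')`. -/
theorem mh_density_recursion {d : ℕ}
    (q a : (Fin d → ℝ) → (Fin d → ℝ) → ℝ)
    (hq_meas : Measurable (Function.uncurry q))
    (hq_nonneg : ∀ x' x, 0 ≤ q x' x)
    (hq_prob : ∀ x, (∫ x', q x' x) = 1)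
    (ha_meas : Measurable (Function.uncurry a))
    (ha_mem : ∀ x' x, a x' x ∈ Set.Icc (0 : ℝ) 1)
    (hr_mem : ∀ x, mhR q a x ∈ Set.Icc (0 : ℝ) 1)
    (hu_meas : Measurable (Function.uncurry (mhU q a)))
    (hu_nonneg : ∀ x' x, 0 ≤ mhU q a x' x)
    (pn : (Fin d → ℝ) → ℝ) (hpn_meas : Measurable pn) (hpn_nonneg : ∀ x, 0 ≤ pn x)
    (Pn : Measure (Fin d → ℝ))
    (hPn : Pn = volume.withDensity (fun x => ENNReal.ofReal (pn x)))
    (hPn_prob : IsProbabilityMeasure Pn) :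
    Pn.bind (mhKernel q a)
      = volume.withDensity
          (fun x => ENNReal.ofReal (mhR q a x * pn x + ∫ x', mhU q a x x' * pn x')) := by
  classical
  have hpn' : Measurable fun x => ENNReal.ofReal (pn x) := hpn_meas.ennreal_ofReal
  have huE : Measurable fun p : (Fin d → ℝ) × (Fin d → ℝ) =>
      ENNReal.ofReal (mhU q a p.1 p.2) := hu_meas.ennreal_ofReal
  have hI : Measurable fun x => ∫ x', mhU q a x' x := by
    have h1 : StronglyMeasurable fun p : (Fin d → ℝ) × (Fin d → ℝ) => mhU q a p.2 p.1 :=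
      (hu_meas.comp measurable_swap).stronglyMeasurable
    exact h1.integral_prod_right'.measurable
  have hr_meas : Measurable (mhR q a) := measurable_const.sub hI
  set g : (Fin d → ℝ) → ℝ≥0∞ :=
    fun y => ∫⁻ x', ENNReal.ofReal (pn x') * ENNReal.ofReal (mhU q a y x') with hg_def
  have hgmeas2 : Measurable fun p : (Fin d → ℝ) × (Fin d → ℝ) =>
      ENNReal.ofReal (pn p.2) * ENNReal.ofReal (mhU q a p.1 p.2) :=
    (hpn'.comp measurable_snd).mul huE
  have hg_meas : Measurable g := hgmeas2.lintegral_prod_right'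
  -- measurability of the kernel
  have hker : Measurable (mhKernel q a) := by
    apply Measure.measurable_of_measurable_coe
    intro s hs
    simp only [mhKernel, Measure.coe_add, Pi.add_apply, Measure.smul_apply, smul_eq_mul,
      withDensity_apply _ hs, Measure.dirac_apply' _ hs]
    apply Measurable.add
    · exact Measurable.lintegral_prod_right'
        (f := fun p : (Fin d → ℝ) × (Fin d → ℝ) => ENNReal.ofReal (mhU q a p.2 p.1))
        (ν := volume.restrict s) (huE.comp measurable_swap)
    · exact hr_meas.ennreal_ofReal.mul (measurable_one.indicator hs)
  -- Step 1: bind equals withDensity of (r·pn + g)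
  have step1 : Pn.bind (mhKernel q a)
      = volume.withDensity
          (fun y => ENNReal.ofReal (mhR q a y) * ENNReal.ofReal (pn y) + g y) := by
    ext s hs
    rw [Measure.bind_apply hs hker.aemeasurable, withDensity_apply _ hs]
    have hkapp : ∀ x, mhKernel q a x s
        = (∫⁻ y in s, ENNReal.ofReal (mhU q a y x))
          + ENNReal.ofReal (mhR q a x) * s.indicator 1 x := by
      intro x
      simp [mhKernel, withDensity_apply _ hs, Measure.dirac_apply' _ hs]
    simp only [hkapp]
    rw [hPn]
    have hA : Measurable fun x => ∫⁻ y in s, ENNReal.ofReal (mhU q a y x) :=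
      Measurable.lintegral_prod_right'
        (f := fun p : (Fin d → ℝ) × (Fin d → ℝ) => ENNReal.ofReal (mhU q a p.2 p.1))
        (ν := volume.restrict s) (huE.comp measurable_swap)
    have hB : Measurable fun x => ENNReal.ofReal (mhR q a x) * s.indicator 1 x :=
      hr_meas.ennreal_ofReal.mul (measurable_one.indicator hs)
    rw [lintegral_withDensity_eq_lintegral_mul _ hpn' (show Measurable fun x =>
      (∫⁻ y in s, ENNReal.ofReal (mhU q a y x)) + ENNReal.ofReal (mhR q a x) * s.indicator 1 x
      from hA.add hB)]
    simp only [Pi.mul_def, mul_add]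
    rw [lintegral_add_left (show Measurable fun x =>
      ENNReal.ofReal (pn x) * ∫⁻ y in s, ENNReal.ofReal (mhU q a y x) from hpn'.mul hA)]
    have term1 : (∫⁻ x, ENNReal.ofReal (pn x) * ∫⁻ y in s, ENNReal.ofReal (mhU q a y x))
        = ∫⁻ y in s, g y := by
      have h1 : ∀ x, ENNReal.ofReal (pn x) * (∫⁻ y in s, ENNReal.ofReal (mhU q a y x))
          = ∫⁻ y in s, ENNReal.ofReal (pn x) * ENNReal.ofReal (mhU q a y x) := by
        intro x
        have hm : Measurable fun y => ENNReal.ofReal (mhU q a y x) :=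
          huE.comp (measurable_id.prodMk measurable_const)
        rw [← lintegral_const_mul _ hm]
      simp only [h1]
      exact lintegral_lintegral_swap
        ((hpn'.comp measurable_fst).mul (huE.comp (measurable_swap))).aemeasurable
    have term2 : (∫⁻ x, ENNReal.ofReal (pn x) *
          (ENNReal.ofReal (mhR q a x) * s.indicator 1 x))
        = ∫⁻ y in s, ENNReal.ofReal (mhR q a y) * ENNReal.ofReal (pn y) := by
      rw [← lintegral_indicator hs]
      congr 1
      ext x
      by_cases hx : x ∈ s <;>
        simp [hx, Set.indicator_of_mem, Set.indicator_of_notMem, mul_comm]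
    rw [term1, term2, lintegral_add_right _ hg_meas]
    exact add_comm _ _
  -- Step 2: a.e. identification of the density
  have hq_int : ∀ x, Integrable (fun x' => q x' x) := by
    intro x
    by_contra h
    have h0 := integral_undef h
    have h1 := hq_prob x
    rw [h0] at h1
    exact one_ne_zero h1.symm
  have hu_le_one : ∀ x, (∫⁻ y, ENNReal.ofReal (mhU q a y x)) ≤ 1 := by
    intro x
    have hle : (∫⁻ y, ENNReal.ofReal (mhU q a y x)) ≤ ∫⁻ y, ENNReal.ofReal (q y x) := by
      apply lintegral_mono
      intro y
      apply ENNReal.ofReal_le_ofReal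
      calc mhU q a y x = a y x * q y x := rfl
        _ ≤ 1 * q y x := mul_le_mul_of_nonneg_right (ha_mem y x).2 (hq_nonneg y x)
        _ = q y x := one_mul _
    have heq : (∫⁻ y, ENNReal.ofReal (q y x)) = 1 := by
      rw [← ofReal_integral_eq_lintegral_ofReal (hq_int x)
        (Filter.Eventually.of_forall fun y => hq_nonneg y x), hq_prob x, ENNReal.ofReal_one]
    exact heq ▸ hle
  have hpn_int : (∫⁻ x, ENNReal.ofReal (pn x)) = 1 := by
    have := hPn_prob.measure_univ
    rw [hPn, withDensity_apply _ MeasurableSet.univ, setLIntegral_univ] at this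
    exact this
  have hg_fin : (∫⁻ y, g y) ≤ 1 := by
    have hswap : (∫⁻ y, g y)
        = ∫⁻ x', ∫⁻ y, ENNReal.ofReal (pn x') * ENNReal.ofReal (mhU q a y x') := by
      exact lintegral_lintegral_swap hgmeas2.aemeasurable
    rw [hswap]
    calc (∫⁻ x', ∫⁻ y, ENNReal.ofReal (pn x') * ENNReal.ofReal (mhU q a y x'))
        = ∫⁻ x', ENNReal.ofReal (pn x') * ∫⁻ y, ENNReal.ofReal (mhU q a y x') := by
          apply lintegral_congr
          intro x'
          have hm : Measurable fun y => ENNReal.ofReal (mhU q a y x') :=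
            huE.comp (measurable_id.prodMk measurable_const)
          exact lintegral_const_mul _ hm
      _ ≤ ∫⁻ x', ENNReal.ofReal (pn x') * 1 :=
          lintegral_mono fun x' => mul_le_mul_right (hu_le_one x') _
      _ = 1 := by simpa using hpn_int
  have hg_ae : ∀ᵐ y : Fin d → ℝ, g y < ⊤ :=
    ae_lt_top hg_meas (lt_of_le_of_lt hg_fin one_lt_top).ne
  have hae : (fun y => ENNReal.ofReal (mhR q a y) * ENNReal.ofReal (pn y) + g y)
      =ᶠ[ae volume] fun x =>
        ENNReal.ofReal (mhR q a x * pn x + ∫ x', mhU q a x x' * pn x') := by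
    filter_upwards [hg_ae] with y hy
    set f : (Fin d → ℝ) → ℝ := fun x' => mhU q a y x' * pn x' with hf_def
    have hf_meas : Measurable f :=
      (hu_meas.comp (measurable_const.prodMk measurable_id)).mul hpn_meas
    have hf_nonneg : ∀ x', 0 ≤ f x' := fun x' =>
      mul_nonneg (hu_nonneg y x') (hpn_nonneg x')
    have hlint : (∫⁻ x', ENNReal.ofReal (f x')) = g y := by
      apply lintegral_congr
      intro x'
      rw [hf_def, ENNReal.ofReal_mul (hu_nonneg y x'), mul_comm]
    have hf_int : Integrable f := by
      refine ⟨hf_meas.aestronglyMeasurable, ?_⟩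
      rw [hasFiniteIntegral_iff_ofReal (Filter.Eventually.of_forall hf_nonneg)]
      rw [hlint]; exact hy
    rw [ENNReal.ofReal_add (mul_nonneg (hr_mem y).1 (hpn_nonneg y))
      (integral_nonneg hf_nonneg), ENNReal.ofReal_mul (hr_mem y).1,
      ofReal_integral_eq_lintegral_ofReal hf_int
        (Filter.Eventually.of_forall hf_nonneg), hlint]
  rw [step1]
  exact withDensity_congr_ae hae
end
end

section
/- Jensen bound on the negative differential entropy of the next state: Assume P_{n+1} := P_n.bind κ has positive density p_{n+1} with respect to λ, and that all integrals appearing below are finite. Then ∫ p_{n+1} log p_{n+1} dλ ≤ E[ log p̂(X_{n+1}|X_n) ] + E[ log( 1 + p_n(X_{n+1}) ) ], where both expectations are over the joint law of (X_n, X_{n+1}), i.e. ∫∫ (·) κ(x)(dx') P_n(dx). -/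
open MeasureTheory ENNReal ProbabilityTheory

noncomputable section

set_option maxHeartbeats 1000000 in
/-- **Jensen bound on the negative differential entropy of the next state.**
Assuming `P_{n+1} := P_n.bind κ` has positive density `p_{n+1}` w.r.t. `λ` and all integrals
below are finite,
`∫ p_{n+1} log p_{n+1} dλ ≤ E[log p̂(X_{n+1}|X_n)] + E[log(1 + p_n(X_{n+1}))]`,
where both expectations are over the joint law of `(X_n, X_{n+1})`. -/
theorem entropy_jensen_bound {d : ℕ} (hd : 0 < d)
    (q a : (Fin d → ℝ) → (Fin d → ℝ) → ℝ)
    (hq_meas : Measurable (Function.uncurry q))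
    (hq_nonneg : ∀ x' x, 0 ≤ q x' x)
    (hq_prob : ∀ x, (∫ x', q x' x) = 1)
    (ha_meas : Measurable (Function.uncurry a))
    (ha_mem : ∀ x' x, a x' x ∈ Set.Icc (0 : ℝ) 1)
    (hr_mem : ∀ x, mhR q a x ∈ Set.Icc (0 : ℝ) 1)
    (pn : (Fin d → ℝ) → ℝ) (hpn_meas : Measurable pn) (hpn_pos : ∀ x, 0 < pn x)
    (Pn : Measure (Fin d → ℝ))
    (hPn : Pn = volume.withDensity (fun x => ENNReal.ofReal (pn x)))
    (hPn_prob : IsProbabilityMeasure Pn)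
    (pn1 : (Fin d → ℝ) → ℝ) (hpn1_meas : Measurable pn1) (hpn1_pos : ∀ x, 0 < pn1 x)
    (hPn1 : Pn.bind (mhKernel q a) = volume.withDensity (fun x => ENNReal.ofReal (pn1 x)))
    (hIa : Integrable (fun x => pn1 x * Real.log (pn1 x)))
    (hI1 : ∀ x, Integrable (fun x' => Real.log (mhPhat q a x' x)) (mhKernel q a x))
    (hI2 : Integrable
      (fun x => ∫ x', Real.log (mhPhat q a x' x) ∂(mhKernel q a x)) Pn)
    (hI3 : ∀ x, Integrable (fun x' => Real.log (1 + pn x')) (mhKernel q a x))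
    (hI4 : Integrable
      (fun x => ∫ x', Real.log (1 + pn x') ∂(mhKernel q a x)) Pn) :
    (∫ x, pn1 x * Real.log (pn1 x))
      ≤ (∫ x, ∫ x', Real.log (mhPhat q a x' x) ∂(mhKernel q a x) ∂Pn)
        + (∫ x, ∫ x', Real.log (1 + pn x') ∂(mhKernel q a x) ∂Pn) := by
  classical
  haveI := hPn_prob
  have h1pn : ∀ y, (0:ℝ) < 1 + pn y := fun y => by have := hpn_pos y; linarith
  have hu_nonneg : ∀ x' x, 0 ≤ mhU q a x' x := fun x' x =>
    mul_nonneg (ha_mem x' x).1 (hq_nonneg x' x)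
  have hu_le : ∀ x' x, mhU q a x' x ≤ q x' x := fun x' x =>
    mul_le_of_le_one_left (hq_nonneg x' x) (ha_mem x' x).2
  have hu_meas : Measurable (fun p : (Fin d → ℝ) × (Fin d → ℝ) => mhU q a p.1 p.2) :=
    ha_meas.mul hq_meas
  have hu_sec : ∀ x, Measurable (fun x' => mhU q a x' x) := fun x =>
    hu_meas.comp (measurable_id.prodMk measurable_const)
  have hq_int : ∀ x, Integrable (fun x' => q x' x) := by
    intro x
    by_contra h
    exact zero_ne_one ((integral_undef h).symm.trans (hq_prob x))
  have hu_int : ∀ x, Integrable (fun x' => mhU q a x' x) := fun x =>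
    (hq_int x).mono' (hu_sec x).aestronglyMeasurable
      (.of_forall fun x' => by
        rw [Real.norm_of_nonneg (hu_nonneg x' x)]; exact hu_le x' x)
  have hru : ∀ x, (∫ x', mhU q a x' x) = 1 - mhR q a x := fun x => by
    simp [mhR]
  have hr_meas : Measurable (mhR q a) := by
    have hsm : StronglyMeasurable fun p : (Fin d → ℝ) × (Fin d → ℝ) => mhU q a p.2 p.1 :=
      (hu_meas.comp measurable_swap).stronglyMeasurable
    exact measurable_const.sub hsm.integral_prod_right'.measurable
  have hκ_meas : Measurable (mhKernel q a) := by
    apply Measure.measurable_of_measurable_coe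
    intro s hs
    simp only [mhKernel, Measure.coe_add, Pi.add_apply, withDensity_apply _ hs,
      Measure.smul_apply, smul_eq_mul, Measure.dirac_apply' _ hs]
    apply Measurable.add
    · exact Measurable.lintegral_prod_right'
        (f := fun p : (Fin d → ℝ) × (Fin d → ℝ) => ENNReal.ofReal (mhU q a p.2 p.1))
        (ENNReal.measurable_ofReal.comp (hu_meas.comp measurable_swap))
    · exact ((ENNReal.measurable_ofReal.comp hr_meas).mul
        ((measurable_one : Measurable (1 : (Fin d → ℝ) → ℝ≥0∞)).indicator hs))
  have hκ_univ : ∀ x, mhKernel q a x Set.univ = 1 := by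
    intro x
    have h1 : ∫⁻ x', ENNReal.ofReal (mhU q a x' x) =
        ENNReal.ofReal (∫ x', mhU q a x' x) :=
      (ofReal_integral_eq_lintegral_ofReal (hu_int x)
        (.of_forall fun x' => hu_nonneg x' x)).symm
    have hint_nonneg : 0 ≤ ∫ x', mhU q a x' x :=
      integral_nonneg fun x' => hu_nonneg x' x
    simp only [mhKernel, Measure.coe_add, Pi.add_apply,
      withDensity_apply _ MeasurableSet.univ, Measure.restrict_univ,
      Measure.smul_apply, smul_eq_mul, Measure.dirac_apply' _ MeasurableSet.univ,
      Set.indicator_univ, Pi.one_apply, mul_one, h1]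
    rw [← ENNReal.ofReal_add hint_nonneg (hr_mem x).1, hru x]
    norm_num
  let K : Kernel (Fin d → ℝ) (Fin d → ℝ) := ⟨mhKernel q a, hκ_meas⟩
  have hK : ∀ x, K x = mhKernel q a x := fun _ => rfl
  haveI : IsMarkovKernel K := ⟨fun x => ⟨hκ_univ x⟩⟩
  have hbind_eq : Pn.bind (mhKernel q a) = (Pn ⊗ₘ K).snd := by
    ext s hs
    rw [Measure.snd_apply hs, Measure.compProd_apply (measurable_snd hs),
      Measure.bind_apply hs hκ_meas.aemeasurable]
    rfl
  have hpn1_lint : ∫⁻ x, ENNReal.ofReal (pn1 x) = 1 := by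
    have := congrArg (fun μ : Measure (Fin d → ℝ) => μ Set.univ) hPn1
    simp only [Measure.bind_apply MeasurableSet.univ hκ_meas.aemeasurable,
      withDensity_apply _ MeasurableSet.univ, Measure.restrict_univ] at this
    rw [← this, lintegral_congr hκ_univ, lintegral_one, measure_univ]
  have hpn1_int : Integrable pn1 := by
    refine ⟨hpn1_meas.aestronglyMeasurable, ?_⟩
    rw [hasFiniteIntegral_iff_ofReal (.of_forall fun x => (hpn1_pos x).le), hpn1_lint]
    exact one_lt_top
  have hpn1_integral : ∫ x, pn1 x = 1 := by
    rw [integral_eq_lintegral_of_nonneg_ae (.of_forall fun x => (hpn1_pos x).le)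
      hpn1_meas.aestronglyMeasurable, hpn1_lint]
    simp
  set g' : (Fin d → ℝ) → ℝ := fun y => pn1 y / (1 + pn y) with hg'
  have hg'_nonneg : ∀ y, 0 ≤ g' y := fun y =>
    div_nonneg (hpn1_pos y).le (h1pn y).le
  have hg'_le : ∀ y, g' y ≤ pn1 y := fun y =>
    div_le_self (hpn1_pos y).le (by have := hpn_pos y; linarith)
  have hg'_meas : Measurable g' := hpn1_meas.div (measurable_const.add hpn_meas)
  have hg'_int : Integrable g' :=
    hpn1_int.mono' hg'_meas.aestronglyMeasurable
      (.of_forall fun y => by rw [Real.norm_of_nonneg (hg'_nonneg y)]; exact hg'_le y)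
  set C : ℝ := ∫ y, g' y with hC
  have hpng'_int : Integrable (fun y => pn y * g' y) :=
    hpn1_int.mono' (hpn_meas.mul hg'_meas).aestronglyMeasurable
      (.of_forall fun y => by
        rw [Real.norm_of_nonneg (mul_nonneg (hpn_pos y).le (hg'_nonneg y))]
        have h2 : pn y * g' y = pn1 y * (pn y / (1 + pn y)) := by
          simp only [hg']; ring
        rw [h2]
        exact mul_le_of_le_one_right (hpn1_pos y).le
          ((div_le_one (h1pn y)).2 (by linarith)))
  have hPn_density : Pn = volume.withDensity (fun x => ((pn x).toNNReal : ℝ≥0∞)) := hPn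
  have hg'Pn_eq : ∫ y, g' y ∂Pn = ∫ y, pn y * g' y := by
    rw [hPn_density, integral_withDensity_eq_integral_smul hpn_meas.real_toNNReal]
    congr 1
    ext y
    rw [NNReal.smul_def, Real.coe_toNNReal _ (hpn_pos y).le, smul_eq_mul]
  have hg'Pn_int : Integrable g' Pn := by
    rw [hPn_density, integrable_withDensity_iff hpn_meas.real_toNNReal.coe_nnreal_ennreal
      (.of_forall fun y => coe_lt_top)]
    refine hpng'_int.congr (.of_forall fun y => ?_)
    simp [Real.coe_toNNReal _ (hpn_pos y).le, mul_comm]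
  have hCsum : C + ∫ y, g' y ∂Pn = 1 := by
    rw [hg'Pn_eq, hC, ← integral_add hg'_int hpng'_int, ← hpn1_integral]
    congr 1
    ext y
    have hne : (1 : ℝ) + pn y ≠ 0 := (h1pn y).ne'
    field_simp [hg']
    simp only [hg']
    rw [div_mul_cancel₀ _ hne]
  -- LHS rewriting
  have hlogpn1_meas : Measurable fun y => Real.log (pn1 y) :=
    Real.measurable_log.comp hpn1_meas
  have hlog_bind_int : Integrable (fun y => Real.log (pn1 y)) (Pn.bind (mhKernel q a)) := by
    rw [hPn1, show (fun x => ENNReal.ofReal (pn1 x))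
        = (fun x => (((pn1 x).toNNReal : ℝ≥0∞))) from rfl,
      integrable_withDensity_iff hpn1_meas.real_toNNReal.coe_nnreal_ennreal
        (.of_forall fun y => coe_lt_top)]
    refine hIa.congr (.of_forall fun y => ?_)
    simp [Real.coe_toNNReal _ (hpn1_pos y).le, mul_comm]
  have hsnd_map : (Pn ⊗ₘ K).snd = (Pn ⊗ₘ K).map Prod.snd := rfl
  have hF_aesm : AEStronglyMeasurable (fun y => Real.log (pn1 y)) ((Pn ⊗ₘ K).map Prod.snd) :=
    hlogpn1_meas.aestronglyMeasurable
  have hF_int : Integrable (fun p : (Fin d → ℝ) × (Fin d → ℝ) => Real.log (pn1 p.2))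
      (Pn ⊗ₘ K) := by
    have h := hlog_bind_int
    rw [hbind_eq, hsnd_map, integrable_map_measure hF_aesm measurable_snd.aemeasurable] at h
    exact h
  have hLHS : (∫ x, pn1 x * Real.log (pn1 x))
      = ∫ x, ∫ x', Real.log (pn1 x') ∂(mhKernel q a x) ∂Pn := by
    have h1 : (∫ x, pn1 x * Real.log (pn1 x))
        = ∫ y, Real.log (pn1 y) ∂(Pn.bind (mhKernel q a)) := by
      rw [hPn1, show (fun x => ENNReal.ofReal (pn1 x))
          = (fun x => (((pn1 x).toNNReal : ℝ≥0∞))) from rfl,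
        integral_withDensity_eq_integral_smul hpn1_meas.real_toNNReal]
      congr 1
      ext y
      simp [NNReal.smul_def, Real.coe_toNNReal _ (hpn1_pos y).le, mul_comm]
    rw [h1, hbind_eq, hsnd_map, integral_map measurable_snd.aemeasurable hF_aesm,
      Measure.integral_compProd hF_int]
    simp only [hK]
  have hiter_int_ae : ∀ᵐ x ∂Pn, Integrable (fun x' => Real.log (pn1 x')) (mhKernel q a x) :=
    ((Measure.integrable_compProd_iff hF_int.aestronglyMeasurable).mp hF_int).1
  have houter_int : Integrable (fun x => ∫ x', Real.log (pn1 x') ∂(mhKernel q a x)) Pn := by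
    have hnorm := ((Measure.integrable_compProd_iff hF_int.aestronglyMeasurable).mp hF_int).2
    have hsm : StronglyMeasurable fun x => ∫ x', Real.log (pn1 x') ∂(K x) :=
      MeasureTheory.StronglyMeasurable.integral_kernel_prod_right
        (f := fun _ x' => Real.log (pn1 x'))
        (hlogpn1_meas.comp measurable_snd).stronglyMeasurable
    refine hnorm.mono' hsm.aestronglyMeasurable (.of_forall fun x => ?_)
    exact norm_integral_le_integral_norm _
  -- the function Z
  set Z : (Fin d → ℝ) → (Fin d → ℝ) → ℝ :=
    fun x x' => pn1 x' / (mhPhat q a x' x * (1 + pn x')) with hZ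
  have hphat_sec : ∀ x, Measurable (fun x' => mhPhat q a x' x) := by
    intro x
    have hset : MeasurableSet {x' : Fin d → ℝ | x' = x} := by
      have : {x' : Fin d → ℝ | x' = x} = {x} := by ext y; simp
      rw [this]; exact MeasurableSet.singleton x
    exact Measurable.ite hset measurable_const (hu_sec x)
  have hphat_nonneg : ∀ x x', 0 ≤ mhPhat q a x' x := by
    intro x x'
    unfold mhPhat
    split
    · exact (hr_mem x).1
    · exact hu_nonneg x' x
  have hZ_meas : ∀ x, Measurable (Z x) := fun x =>
    hpn1_meas.div ((hphat_sec x).mul (measurable_const.add hpn_meas))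
  have hZ_nonneg : ∀ x x', 0 ≤ Z x x' := fun x x' =>
    div_nonneg (hpn1_pos x').le (mul_nonneg (hphat_nonneg x x') (h1pn x').le)
  have hsingleton : ∀ x : Fin d → ℝ, volume ({x} : Set (Fin d → ℝ)) = 0 := by
    intro x
    have h : ({x} : Set (Fin d → ℝ)) = Set.univ.pi fun i => {x i} := by
      ext y; simp [funext_iff, Set.mem_pi]
    rw [h, volume_pi, Measure.pi_pi]
    exact Finset.prod_eq_zero (Finset.mem_univ ⟨0, hd⟩) (by simp)
  have hae_ne : ∀ x : Fin d → ℝ, ∀ᵐ x' ∂(volume : Measure (Fin d → ℝ)), x' ≠ x := by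
    intro x
    rw [ae_iff]
    have h : {x' : Fin d → ℝ | ¬ x' ≠ x} = {x} := by ext y; simp
    rw [h]; exact hsingleton x
  have hZU_bound : ∀ x, ∀ᵐ x' ∂(volume : Measure (Fin d → ℝ)),
      Z x x' * mhU q a x' x ≤ g' x' := by
    intro x
    filter_upwards [hae_ne x] with x' hne
    have hphat : mhPhat q a x' x = mhU q a x' x := if_neg hne
    rcases eq_or_lt_of_le (hu_nonneg x' x) with h0 | hpos
    · rw [← h0, mul_zero]; exact hg'_nonneg x'
    · have heq : Z x x' * mhU q a x' x = g' x' := by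
        simp only [hZ, hg', hphat]
        rw [div_mul_eq_mul_div, ← div_div, mul_div_cancel_right₀ _ hpos.ne']
      rw [heq]
  have hZU_int : ∀ x, Integrable (fun x' => Z x x' * mhU q a x' x) := by
    intro x
    refine hpn1_int.mono' ((hZ_meas x).mul (hu_sec x)).aestronglyMeasurable ?_
    filter_upwards [hZU_bound x] with x' hb
    rw [Real.norm_of_nonneg (mul_nonneg (hZ_nonneg x x') (hu_nonneg x' x))]
    exact hb.trans (hg'_le x')
  have hν₁_int : ∀ x, Integrable (Z x)
      (volume.withDensity fun x' => ENNReal.ofReal (mhU q a x' x)) := by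
    intro x
    rw [show (fun x' => ENNReal.ofReal (mhU q a x' x))
        = (fun x' => (((mhU q a x' x).toNNReal : ℝ≥0∞))) from rfl,
      integrable_withDensity_iff (hu_sec x).real_toNNReal.coe_nnreal_ennreal
        (.of_forall fun _ => coe_lt_top)]
    refine (hZU_int x).congr (.of_forall fun x' => ?_)
    simp [Real.coe_toNNReal _ (hu_nonneg x' x)]
  have hν₁_val : ∀ x, ∫ x', Z x x'
        ∂(volume.withDensity fun x' => ENNReal.ofReal (mhU q a x' x))
      = ∫ x', Z x x' * mhU q a x' x := by
    intro x
    rw [show (fun x' => ENNReal.ofReal (mhU q a x' x))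
        = (fun x' => (((mhU q a x' x).toNNReal : ℝ≥0∞))) from rfl,
      integral_withDensity_eq_integral_smul (hu_sec x).real_toNNReal]
    congr 1
    ext x'
    simp [NNReal.smul_def, Real.coe_toNNReal _ (hu_nonneg x' x), mul_comm]
  have hν₁_le : ∀ x, ∫ x', Z x x' * mhU q a x' x ≤ C :=
    fun x => integral_mono_ae (hZU_int x) hg'_int (hZU_bound x)
  have hdirac_int : ∀ x, Integrable (Z x) (Measure.dirac x) := by
    intro x
    refine ⟨(hZ_meas x).aestronglyMeasurable, ?_⟩
    rw [hasFiniteIntegral_def, lintegral_dirac' x (hZ_meas x).enorm]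
    exact coe_lt_top
  have hν₂_int : ∀ x, Integrable (Z x) (ENNReal.ofReal (mhR q a x) • Measure.dirac x) :=
    fun x => (hdirac_int x).smul_measure ofReal_ne_top
  have hν₂_le : ∀ x, ∫ x', Z x x' ∂(ENNReal.ofReal (mhR q a x) • Measure.dirac x) ≤ g' x := by
    intro x
    rw [integral_smul_measure, integral_dirac, toReal_ofReal (hr_mem x).1, smul_eq_mul]
    rcases eq_or_lt_of_le (hr_mem x).1 with h0 | hpos
    · rw [← h0, zero_mul]; exact hg'_nonneg x
    · have hphat : mhPhat q a x x = mhR q a x := if_pos rfl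
      have heq : mhR q a x * Z x x = g' x := by
        simp only [hZ, hg', hphat]
        rw [mul_div_assoc', ← div_div, mul_div_cancel_left₀ _ hpos.ne']
      exact le_of_eq heq
  have hmk : ∀ x, mhKernel q a x
      = (volume.withDensity fun x' => ENNReal.ofReal (mhU q a x' x))
        + ENNReal.ofReal (mhR q a x) • Measure.dirac x := fun x => rfl
  have hZ_int : ∀ x, Integrable (Z x) (mhKernel q a x) := fun x => by
    rw [hmk x]
    exact integrable_add_measure.mpr ⟨hν₁_int x, hν₂_int x⟩
  have hZ_val : ∀ x, ∫ x', Z x x' ∂(mhKernel q a x) ≤ C + g' x := by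
    intro x
    rw [hmk x, integral_add_measure (hν₁_int x) (hν₂_int x), hν₁_val x]
    exact add_le_add (hν₁_le x) (hν₂_le x)
  have hpos_ae : ∀ x, ∀ᵐ x' ∂(mhKernel q a x), 0 < mhPhat q a x' x := by
    intro x
    rw [ae_iff]
    have hSmeas : MeasurableSet {x' : Fin d → ℝ | ¬ 0 < mhPhat q a x' x} := by
      have h : {x' : Fin d → ℝ | ¬ 0 < mhPhat q a x' x}
          = {x' : Fin d → ℝ | mhPhat q a x' x ≤ 0} := by
        ext y; simp [not_lt]
      rw [h]
      exact measurableSet_le (hphat_sec x) measurable_const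
    have h1 : (volume.withDensity fun x' => ENNReal.ofReal (mhU q a x' x))
        {x' : Fin d → ℝ | ¬ 0 < mhPhat q a x' x} = 0 := by
      rw [withDensity_apply _ hSmeas]
      have hae : ∀ᵐ x' ∂(volume.restrict {x' : Fin d → ℝ | ¬ 0 < mhPhat q a x' x}),
          ENNReal.ofReal (mhU q a x' x) = 0 := by
        filter_upwards [ae_restrict_mem hSmeas,
          (hae_ne x).filter_mono (ae_mono Measure.restrict_le_self)] with x' hmem hne
        have hle : mhPhat q a x' x ≤ 0 := not_lt.mp hmem
        rw [mhPhat, if_neg hne] at hle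
        exact ofReal_eq_zero.mpr hle
      rw [lintegral_congr_ae hae, lintegral_zero]
    have h2 : (ENNReal.ofReal (mhR q a x) • Measure.dirac x)
        {x' : Fin d → ℝ | ¬ 0 < mhPhat q a x' x} = 0 := by
      rw [Measure.smul_apply, smul_eq_mul, Measure.dirac_apply' _ hSmeas]
      by_cases hx : x ∈ {x' : Fin d → ℝ | ¬ 0 < mhPhat q a x' x}
      · have hle : mhPhat q a x x ≤ 0 := not_lt.mp hx
        rw [mhPhat, if_pos rfl] at hle
        rw [ofReal_eq_zero.mpr hle, zero_mul]
      · rw [Set.indicator_of_notMem hx, mul_zero]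
    rw [hmk x, Measure.add_apply, h1, h2, add_zero]
  have hlog_bound : ∀ x, ∀ᵐ x' ∂(mhKernel q a x),
      Real.log (pn1 x') ≤ Real.log (mhPhat q a x' x) + Real.log (1 + pn x')
        + (Z x x' - 1) := by
    intro x
    filter_upwards [hpos_ae x] with x' hp
    have hZpos : 0 < Z x x' := div_pos (hpn1_pos x') (mul_pos hp (h1pn x'))
    have hprod : pn1 x' = mhPhat q a x' x * (1 + pn x') * Z x x' := by
      simp only [hZ]
      rw [mul_div_assoc', mul_comm, mul_div_assoc, div_self (mul_pos hp (h1pn x')).ne', mul_one]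
    calc Real.log (pn1 x')
        = Real.log (mhPhat q a x' x) + Real.log (1 + pn x') + Real.log (Z x x') := by
          rw [hprod, Real.log_mul (mul_pos hp (h1pn x')).ne' hZpos.ne',
            Real.log_mul hp.ne' (h1pn x').ne']
      _ ≤ Real.log (mhPhat q a x' x) + Real.log (1 + pn x') + (Z x x' - 1) := by
          have := Real.log_le_sub_one_of_pos hZpos
          linarith
  have hinner : ∀ᵐ x ∂Pn,
      (∫ x', Real.log (pn1 x') ∂(mhKernel q a x))
        ≤ (∫ x', Real.log (mhPhat q a x' x) ∂(mhKernel q a x))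
          + (∫ x', Real.log (1 + pn x') ∂(mhKernel q a x)) + (C + g' x - 1) := by
    filter_upwards [hiter_int_ae] with x hx
    haveI : IsProbabilityMeasure (mhKernel q a x) := ⟨hκ_univ x⟩
    have hint_rhs : Integrable (fun x' => Real.log (mhPhat q a x' x)
        + Real.log (1 + pn x') + (Z x x' - 1)) (mhKernel q a x) :=
      ((hI1 x).add (hI3 x)).add ((hZ_int x).sub (integrable_const 1))
    have h1 := integral_mono_ae hx hint_rhs (hlog_bound x)
    have hIab : Integrable (fun x' => Real.log (mhPhat q a x' x) + Real.log (1 + pn x'))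
        (mhKernel q a x) := (hI1 x).add (hI3 x)
    have hIz1 : Integrable (fun x' => Z x x' - 1) (mhKernel q a x) :=
      (hZ_int x).sub (integrable_const 1)
    rw [integral_add hIab hIz1, integral_add (hI1 x) (hI3 x),
      integral_sub (hZ_int x) (integrable_const 1), integral_const] at h1
    simp only [measure_univ, probReal_univ, ENNReal.toReal_one, smul_eq_mul, one_mul] at h1
    have h2 := hZ_val x
    linarith
  have houter_rhs_int : Integrable (fun x =>
      (∫ x', Real.log (mhPhat q a x' x) ∂(mhKernel q a x))
        + (∫ x', Real.log (1 + pn x') ∂(mhKernel q a x)) + (C + g' x - 1)) Pn :=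
    (hI2.add hI4).add (((integrable_const C).add hg'Pn_int).sub (integrable_const 1))
  have hfinal := integral_mono_ae houter_int houter_rhs_int hinner
  have hAB : Integrable (fun x => (∫ x', Real.log (mhPhat q a x' x) ∂(mhKernel q a x))
      + (∫ x', Real.log (1 + pn x') ∂(mhKernel q a x))) Pn := hI2.add hI4
  have hCg : Integrable (fun x => C + g' x) Pn := (integrable_const C).add hg'Pn_int
  have hCg1 : Integrable (fun x => C + g' x - 1) Pn := hCg.sub (integrable_const 1)
  rw [integral_add hAB hCg1, integral_add hI2 hI4,
    integral_sub hCg (integrable_const 1),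
    integral_add (integrable_const C) hg'Pn_int, integral_const, integral_const] at hfinal
  simp only [measure_univ, probReal_univ, ENNReal.toReal_one, smul_eq_mul, one_mul] at hfinal
  rw [hLHS]
  linarith [hCsum]

end
end

section
/- Contrastive divergence lower bound via the CDLB reward (combination of Propositions 1 and 2): Assume all integrals appearing below are finite and that P_{n+1} admits a positive density p_{n+1} with respect to λ. Define the CDLB reward r̃(x, x*) := α(x*|x) ( log p(x*) − log p(x) ) − α(x*|x) log α(x*|x) − (1 − α(x*|x)) log(1 − α(x*|x)) − α(x*|x) log q(x*|x), with the convention 0 log 0 = 0. Then Δ_n ≥ E[ r̃(X_n, X*_{n+1}) ] + E[ log( p_n(X_n) / (1 + p_n(X_{n+1})) ) ], where the first expectation is over the joint law of (X_n, X*_{n+1}), i.e. ∫∫ (·) q(x'|x) λ(dx') P_n(dx), and the second is over the joint law of (X_n, X_{n+1}), i.e. ∫∫ (·) κ(x)(dx') P_n(dx). -/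
open MeasureTheory ENNReal

noncomputable section

/-- The CDLB reward
`r̃(x, x*) = α(x*|x)(log p(x*) − log p(x)) − α(x*|x) log α(x*|x)
  − (1 − α(x*|x)) log(1 − α(x*|x)) − α(x*|x) log q(x*|x)`
(with the convention `0 log 0 = 0`, automatic since `Real.log 0 = 0`). -/
def cdlbReward {d : ℕ} (p : (Fin d → ℝ) → ℝ) (q a : (Fin d → ℝ) → (Fin d → ℝ) → ℝ)
    (x xstar : Fin d → ℝ) : ℝ :=
  a xstar x * (Real.log (p xstar) - Real.log (p x))
    - a xstar x * Real.log (a xstar x)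
    - (1 - a xstar x) * Real.log (1 - a xstar x)
    - a xstar x * Real.log (q xstar x)

section Aux

/-- Elementary inequality: `t - s ≤ t (log t - log s)` for `t ≥ 0`, `s > 0`. -/
lemma elem_log_ineq {t s : ℝ} (ht : 0 ≤ t) (hs : 0 < s) :
    t - s ≤ t * (Real.log t - Real.log s) := by
  rcases eq_or_lt_of_le ht with h | h
  · simp [← h]; positivity
  · have h1 : Real.log (s / t) ≤ s / t - 1 := Real.log_le_sub_one_of_pos (by positivity)
    rw [Real.log_div hs.ne' h.ne'] at h1
    have := mul_le_mul_of_nonneg_left h1 ht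
    have ht' : t * (s / t) = s := by field_simp
    nlinarith

lemma W_identity (A Q Px Px' Pnx Pnx' P1 : ℝ) (hA0 : 0 ≤ A) (hA1 : A ≤ 1)
    (hQ : 0 ≤ Q) (hPx : 0 < Px) (hPx' : 0 < Px') (hPnx : 0 < Pnx) (hPnx' : 0 < Pnx')
    (hP1 : 0 < P1) :
    Real.log (Pnx / Px) * Q - (A * Q) * Real.log (P1 / Px')
      - (A * (Real.log Px' - Real.log Px) - A * Real.log A
          - (1 - A) * Real.log (1 - A) - A * Real.log Q) * Q
      - (A * Q) * Real.log (Pnx / (1 + Pnx'))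
    = Real.log (Pnx / Px) * (Q - A * Q)
      + (A * Q) * (Real.log (A * Q) - Real.log (P1 / (1 + Pnx')))
      + (Q - A * Q) * (Real.log (Q - A * Q) - Real.log Q) := by
  have h1p : (0:ℝ) < 1 + Pnx' := by linarith
  rcases eq_or_lt_of_le hQ with hQ0 | hQpos
  · rw [← hQ0]; ring_nf
  · have hAQ : A * Q * Real.log (A * Q) = A * Q * (Real.log A + Real.log Q) := by
      rcases eq_or_lt_of_le hA0 with h | h
      · rw [← h]; simp
      · rw [Real.log_mul h.ne' hQpos.ne']
    have hQAQ : (Q - A * Q) * Real.log (Q - A * Q)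
        = (Q - A * Q) * (Real.log (1 - A) + Real.log Q) := by
      have he : Q - A * Q = (1 - A) * Q := by ring
      rcases eq_or_lt_of_le hA1 with h | h
      · rw [he, h]; simp
      · rw [he, Real.log_mul (by linarith) hQpos.ne']
    rw [Real.log_div hPnx.ne' hPx.ne', Real.log_div hP1.ne' hPx'.ne',
      Real.log_div hPnx.ne' h1p.ne', Real.log_div hP1.ne' h1p.ne']
    linarith [hAQ, hQAQ]

lemma integral_bind_aux {α β : Type*} [MeasurableSpace α] [MeasurableSpace β]
    {m : Measure α} {κ : α → Measure β} (hκ : Measurable κ)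
    {f : β → ℝ} (hf : Measurable f) (hfi : Integrable f (m.bind κ)) :
    (∫ y, f y ∂(m.bind κ)) = ∫ x, ∫ y, f y ∂(κ x) ∂m
    ∧ Integrable (fun x => ∫ y, f y ∂(κ x)) m
    ∧ ∀ᵐ x ∂m, Integrable f (κ x) := by
  have hfp : Measurable fun y => ENNReal.ofReal (f y) := measurable_ofReal.comp hf
  have hfn : Measurable fun y => ENNReal.ofReal (-f y) := measurable_ofReal.comp hf.neg
  have hHp : Measurable fun x => ∫⁻ y, ENNReal.ofReal (f y) ∂(κ x) :=
    (Measure.measurable_lintegral hfp).comp hκ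
  have hHn : Measurable fun x => ∫⁻ y, ENNReal.ofReal (-f y) ∂(κ x) :=
    (Measure.measurable_lintegral hfn).comp hκ
  have hbp : ∫⁻ y, ENNReal.ofReal (f y) ∂(m.bind κ)
      = ∫⁻ x, ∫⁻ y, ENNReal.ofReal (f y) ∂(κ x) ∂m := Measure.lintegral_bind hκ.aemeasurable hfp.aemeasurable
  have hbn : ∫⁻ y, ENNReal.ofReal (-f y) ∂(m.bind κ)
      = ∫⁻ x, ∫⁻ y, ENNReal.ofReal (-f y) ∂(κ x) ∂m := Measure.lintegral_bind hκ.aemeasurable hfn.aemeasurable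
  have hnorm : ∀ (μ' : Measure β), ∫⁻ y, (‖f y‖₊ : ℝ≥0∞) ∂μ'
      ≤ ∫⁻ y, (ENNReal.ofReal (f y) + ENNReal.ofReal (-f y)) ∂μ' := by
    intro μ'
    refine lintegral_mono fun y => ?_
    rw [← enorm_eq_nnnorm, Real.enorm_eq_ofReal_abs]
    rcases le_total 0 (f y) with h | h
    · rw [abs_of_nonneg h]; exact le_add_right le_rfl
    · rw [abs_of_nonpos h]; exact le_add_left le_rfl
  have hmono : ∀ (μ' : Measure β), ∫⁻ y, ENNReal.ofReal (f y) ∂μ'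
      ≤ ∫⁻ y, (‖f y‖₊ : ℝ≥0∞) ∂μ' := by
    intro μ'
    refine lintegral_mono fun y => ?_
    rw [← enorm_eq_nnnorm, Real.enorm_eq_ofReal_abs]
    exact ENNReal.ofReal_le_ofReal (le_abs_self _)
  have hmono' : ∀ (μ' : Measure β), ∫⁻ y, ENNReal.ofReal (-f y) ∂μ'
      ≤ ∫⁻ y, (‖f y‖₊ : ℝ≥0∞) ∂μ' := by
    intro μ'
    refine lintegral_mono fun y => ?_
    rw [← enorm_eq_nnnorm, Real.enorm_eq_ofReal_abs]
    exact ENNReal.ofReal_le_ofReal (neg_le_abs _)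
  have htotal : ∫⁻ y, (‖f y‖₊ : ℝ≥0∞) ∂(m.bind κ) < ∞ := hfi.2
  have hfin_p : ∫⁻ x, ∫⁻ y, ENNReal.ofReal (f y) ∂(κ x) ∂m < ∞ := by
    rw [← hbp]; exact lt_of_le_of_lt (hmono _) htotal
  have hfin_n : ∫⁻ x, ∫⁻ y, ENNReal.ofReal (-f y) ∂(κ x) ∂m < ∞ := by
    rw [← hbn]; exact lt_of_le_of_lt (hmono' _) htotal
  have haep : ∀ᵐ x ∂m, ∫⁻ y, ENNReal.ofReal (f y) ∂(κ x) < ∞ := ae_lt_top hHp hfin_p.ne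
  have haen : ∀ᵐ x ∂m, ∫⁻ y, ENNReal.ofReal (-f y) ∂(κ x) < ∞ := ae_lt_top hHn hfin_n.ne
  have haeint : ∀ᵐ x ∂m, Integrable f (κ x) := by
    filter_upwards [haep, haen] with x h1 h2
    refine ⟨hf.aestronglyMeasurable, ?_⟩
    have : ∫⁻ y, (‖f y‖₊ : ℝ≥0∞) ∂(κ x) < ∞ := by
      refine lt_of_le_of_lt (hnorm _) ?_
      rw [lintegral_add_left hfp]
      exact ENNReal.add_lt_top.2 ⟨h1, h2⟩
    exact this
  have hIp : Integrable (fun x => (∫⁻ y, ENNReal.ofReal (f y) ∂(κ x)).toReal) m := by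
    refine ⟨hHp.ennreal_toReal.aestronglyMeasurable, ?_⟩
    have heq : ∀ᵐ x ∂m, (‖(∫⁻ y, ENNReal.ofReal (f y) ∂(κ x)).toReal‖₊ : ℝ≥0∞)
        = ∫⁻ y, ENNReal.ofReal (f y) ∂(κ x) := by
      filter_upwards [haep] with x hx
      rw [← enorm_eq_nnnorm, Real.enorm_eq_ofReal ENNReal.toReal_nonneg, ENNReal.ofReal_toReal hx.ne]
    show ∫⁻ x, (‖(∫⁻ y, ENNReal.ofReal (f y) ∂(κ x)).toReal‖₊ : ℝ≥0∞) ∂m < ∞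
    rw [lintegral_congr_ae heq]
    exact hfin_p
  have hIn : Integrable (fun x => (∫⁻ y, ENNReal.ofReal (-f y) ∂(κ x)).toReal) m := by
    refine ⟨hHn.ennreal_toReal.aestronglyMeasurable, ?_⟩
    have heq : ∀ᵐ x ∂m, (‖(∫⁻ y, ENNReal.ofReal (-f y) ∂(κ x)).toReal‖₊ : ℝ≥0∞)
        = ∫⁻ y, ENNReal.ofReal (-f y) ∂(κ x) := by
      filter_upwards [haen] with x hx
      rw [← enorm_eq_nnnorm, Real.enorm_eq_ofReal ENNReal.toReal_nonneg, ENNReal.ofReal_toReal hx.ne]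
    show ∫⁻ x, (‖(∫⁻ y, ENNReal.ofReal (-f y) ∂(κ x)).toReal‖₊ : ℝ≥0∞) ∂m < ∞
    rw [lintegral_congr_ae heq]
    exact hfin_n
  have hgae : ∀ᵐ x ∂m, (∫ y, f y ∂(κ x))
      = (∫⁻ y, ENNReal.ofReal (f y) ∂(κ x)).toReal
        - (∫⁻ y, ENNReal.ofReal (-f y) ∂(κ x)).toReal := by
    filter_upwards [haeint] with x hx
    exact integral_eq_lintegral_pos_part_sub_lintegral_neg_part hx
  have hIg : Integrable (fun x => ∫ y, f y ∂(κ x)) m :=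
    (hIp.sub hIn).congr (by filter_upwards [hgae] with x hx; simp [hx])
  refine ⟨?_, hIg, haeint⟩
  rw [integral_congr_ae hgae, integral_sub hIp hIn,
    integral_toReal hHp.aemeasurable haep, integral_toReal hHn.aemeasurable haen,
    ← hbp, ← hbn, integral_eq_lintegral_pos_part_sub_lintegral_neg_part hfi]

variable {d : ℕ} {q a : (Fin d → ℝ) → (Fin d → ℝ) → ℝ}

lemma mhU_uncurry_meas (hq_meas : Measurable (Function.uncurry q))
    (ha_meas : Measurable (Function.uncurry a)) :
    Measurable (Function.uncurry (mhU q a)) := ha_meas.mul hq_meas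

lemma mhU_meas (hq_meas : Measurable (Function.uncurry q))
    (ha_meas : Measurable (Function.uncurry a)) (x : Fin d → ℝ) :
    Measurable fun x' => mhU q a x' x :=
  (mhU_uncurry_meas hq_meas ha_meas).comp (measurable_id.prodMk measurable_const)

lemma mhQ_meas (hq_meas : Measurable (Function.uncurry q)) (x : Fin d → ℝ) :
    Measurable fun x' => q x' x :=
  hq_meas.comp (measurable_id.prodMk measurable_const)

lemma mhR_meas (hq_meas : Measurable (Function.uncurry q))
    (ha_meas : Measurable (Function.uncurry a)) :
    Measurable (mhR q a) := by
  have h : StronglyMeasurable fun p : (Fin d → ℝ) × (Fin d → ℝ) => mhU q a p.2 p.1 :=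
    ((mhU_uncurry_meas hq_meas ha_meas).comp measurable_swap).stronglyMeasurable
  exact (measurable_const.sub h.integral_prod_right'.measurable)

lemma mhKernel_meas (hq_meas : Measurable (Function.uncurry q))
    (ha_meas : Measurable (Function.uncurry a)) :
    Measurable (mhKernel q a) := by
  apply Measure.measurable_of_measurable_coe
  intro s hs
  have : (fun x => mhKernel q a x s)
      = fun x => (∫⁻ x' in s, ENNReal.ofReal (mhU q a x' x) ∂volume)
        + ENNReal.ofReal (mhR q a x) * s.indicator (1 : (Fin d → ℝ) → ℝ≥0∞) x := by
    funext x
    simp only [mhKernel, Measure.coe_add, Pi.add_apply, Measure.smul_apply, smul_eq_mul]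
    rw [withDensity_apply _ hs, Measure.dirac_apply' _ hs]
  rw [this]
  refine Measurable.add ?_ ?_
  · exact Measurable.lintegral_prod_right'
      (f := fun p : (Fin d → ℝ) × (Fin d → ℝ) => ENNReal.ofReal (mhU q a p.2 p.1))
      (measurable_ofReal.comp ((mhU_uncurry_meas hq_meas ha_meas).comp measurable_swap))
  · exact (measurable_ofReal.comp (mhR_meas hq_meas ha_meas)).mul
      (measurable_one.indicator hs)

lemma mhQ_integrable (hq_prob : ∀ x, (∫ x', q x' x) = 1) (x : Fin d → ℝ) :
    Integrable (fun x' => q x' x) (volume : Measure (Fin d → ℝ)) := by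
  by_contra h
  have h0 : (1 : ℝ) = 0 := by rw [← hq_prob x, integral_undef h]
  exact one_ne_zero h0

lemma mhU_integrable (hq_meas : Measurable (Function.uncurry q))
    (ha_meas : Measurable (Function.uncurry a))
    (hq_nonneg : ∀ x' x, 0 ≤ q x' x) (ha_mem : ∀ x' x, a x' x ∈ Set.Icc (0:ℝ) 1)
    (hq_prob : ∀ x, (∫ x', q x' x) = 1) (x : Fin d → ℝ) :
    Integrable (fun x' => mhU q a x' x) (volume : Measure (Fin d → ℝ)) := by
  refine Integrable.mono' (mhQ_integrable hq_prob x)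
    (mhU_meas hq_meas ha_meas x).aestronglyMeasurable (Filter.Eventually.of_forall fun x' => ?_)
  have h1 := (ha_mem x' x).1
  have h2 := (ha_mem x' x).2
  have h3 := hq_nonneg x' x
  show |a x' x * q x' x| ≤ q x' x
  rw [abs_of_nonneg (mul_nonneg h1 h3)]
  calc a x' x * q x' x ≤ 1 * q x' x := by nlinarith
    _ = q x' x := one_mul _

lemma mhU_integral (x : Fin d → ℝ) :
    (∫ x', mhU q a x' x) = 1 - mhR q a x := by
  have : mhR q a x = 1 - ∫ x', mhU q a x' x := rfl
  linarith

lemma mhKernel_univ (hq_meas : Measurable (Function.uncurry q))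
    (ha_meas : Measurable (Function.uncurry a))
    (hq_nonneg : ∀ x' x, 0 ≤ q x' x) (ha_mem : ∀ x' x, a x' x ∈ Set.Icc (0:ℝ) 1)
    (hq_prob : ∀ x, (∫ x', q x' x) = 1)
    (hr_mem : ∀ x, mhR q a x ∈ Set.Icc (0:ℝ) 1) (x : Fin d → ℝ) :
    mhKernel q a x Set.univ = 1 := by
  have hu_nonneg : ∀ x', 0 ≤ mhU q a x' x := fun x' =>
    mul_nonneg (ha_mem x' x).1 (hq_nonneg x' x)
  have h1 : ∫⁻ x', ENNReal.ofReal (mhU q a x' x) ∂volume = ENNReal.ofReal (1 - mhR q a x) := by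
    rw [← ofReal_integral_eq_lintegral_ofReal
      (mhU_integrable hq_meas ha_meas hq_nonneg ha_mem hq_prob x)
      (Filter.Eventually.of_forall hu_nonneg), mhU_integral x]
  have h2 := (hr_mem x).1
  have h3 := (hr_mem x).2
  simp only [mhKernel, Measure.coe_add, Pi.add_apply, Measure.smul_apply, smul_eq_mul,
    withDensity_apply _ MeasurableSet.univ, Measure.restrict_univ, Measure.dirac_apply_of_mem
      (Set.mem_univ x), mul_one, h1]
  rw [← ENNReal.ofReal_add (by linarith) h2]
  norm_num

lemma mhKernel_integral (hq_meas : Measurable (Function.uncurry q))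
    (ha_meas : Measurable (Function.uncurry a))
    (hq_nonneg : ∀ x' x, 0 ≤ q x' x) (ha_mem : ∀ x' x, a x' x ∈ Set.Icc (0:ℝ) 1)
    (hr_mem : ∀ x, mhR q a x ∈ Set.Icc (0:ℝ) 1) (x : Fin d → ℝ)
    (f : (Fin d → ℝ) → ℝ) (hf : Measurable f) (hfi : Integrable f (mhKernel q a x)) :
    ∫ y, f y ∂(mhKernel q a x) = (∫ x', mhU q a x' x * f x') + mhR q a x * f x := by
  have hu_nonneg : ∀ x', 0 ≤ mhU q a x' x := fun x' =>
    mul_nonneg (ha_mem x' x).1 (hq_nonneg x' x)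
  have hsplit := (integrable_add_measure.mp (by exact hfi))
  rw [show mhKernel q a x = volume.withDensity (fun x' => ENNReal.ofReal (mhU q a x' x))
    + ENNReal.ofReal (mhR q a x) • Measure.dirac x from rfl,
    integral_add_measure hsplit.1 hsplit.2]
  congr 1
  · rw [show (fun x' => ENNReal.ofReal (mhU q a x' x))
        = fun x' => ((mhU q a x' x).toNNReal : ℝ≥0∞) from rfl,
      integral_withDensity_eq_integral_smul
        (f := fun x' => (mhU q a x' x).toNNReal)
        ((mhU_meas hq_meas ha_meas x).real_toNNReal) f]
    congr 1
    funext x'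
    rw [NNReal.smul_def, Real.coe_toNNReal _ (hu_nonneg x'), smul_eq_mul]
  · rw [integral_smul_measure, integral_dirac' f x hf.stronglyMeasurable,
      ENNReal.toReal_ofReal (hr_mem x).1, smul_eq_mul]

lemma mhKernel_integrable_left (hq_meas : Measurable (Function.uncurry q))
    (ha_meas : Measurable (Function.uncurry a))
    (hq_nonneg : ∀ x' x, 0 ≤ q x' x) (ha_mem : ∀ x' x, a x' x ∈ Set.Icc (0:ℝ) 1)
    (x : Fin d → ℝ)
    (f : (Fin d → ℝ) → ℝ) (hfi : Integrable f (mhKernel q a x)) :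
    Integrable (fun x' => mhU q a x' x * f x') (volume : Measure (Fin d → ℝ)) := by
  have hu_nonneg : ∀ x', 0 ≤ mhU q a x' x := fun x' =>
    mul_nonneg (ha_mem x' x).1 (hq_nonneg x' x)
  have h1 : Integrable f (volume.withDensity (fun x' => ENNReal.ofReal (mhU q a x' x))) :=
    (integrable_add_measure.mp (by exact hfi)).1
  rw [integrable_withDensity_iff (f := fun x' => ENNReal.ofReal (mhU q a x' x))
    ((mhU_meas hq_meas ha_meas x).ennreal_ofReal)
    (Filter.Eventually.of_forall fun x' => ofReal_lt_top)] at h1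
  refine h1.congr (Filter.Eventually.of_forall fun x' => ?_)
  show f x' * (ENNReal.ofReal (mhU q a x' x)).toReal = mhU q a x' x * f x'
  rw [ENNReal.toReal_ofReal (hu_nonneg x'), mul_comm]

end Aux

/-- **Contrastive divergence lower bound via the CDLB reward** (combination of
Propositions 1 and 2). Assuming all integrals below are finite and `P_{n+1} := P_n.bind κ`
has positive density `p_{n+1}` w.r.t. `λ`,
`Δ_n ≥ E[r̃(X_n, X*_{n+1})] + E[log (p_n(X_n) / (1 + p_n(X_{n+1})))]`,
where the first expectation is over the joint law of `(X_n, X*_{n+1})` (the proposal having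
density `q(·|X_n)`) and the second over the joint law of `(X_n, X_{n+1})`. -/
theorem contrastive_divergence_cdlb_reward_bound {d : ℕ} (hd : 0 < d)
    (q a : (Fin d → ℝ) → (Fin d → ℝ) → ℝ)
    (hq_meas : Measurable (Function.uncurry q))
    (hq_nonneg : ∀ x' x, 0 ≤ q x' x)
    (hq_prob : ∀ x, (∫ x', q x' x) = 1)
    (ha_meas : Measurable (Function.uncurry a))
    (ha_mem : ∀ x' x, a x' x ∈ Set.Icc (0 : ℝ) 1)
    (hr_mem : ∀ x, mhR q a x ∈ Set.Icc (0 : ℝ) 1)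
    (p : (Fin d → ℝ) → ℝ) (hp_meas : Measurable p) (hp_pos : ∀ x, 0 < p x)
    (hP_prob : IsProbabilityMeasure (volume.withDensity (fun x => ENNReal.ofReal (p x))))
    (pn : (Fin d → ℝ) → ℝ) (hpn_meas : Measurable pn) (hpn_pos : ∀ x, 0 < pn x)
    (Pn : Measure (Fin d → ℝ))
    (hPn : Pn = volume.withDensity (fun x => ENNReal.ofReal (pn x)))
    (hPn_prob : IsProbabilityMeasure Pn)
    (pn1 : (Fin d → ℝ) → ℝ) (hpn1_meas : Measurable pn1) (hpn1_pos : ∀ x, 0 < pn1 x)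
    (hPn1 : Pn.bind (mhKernel q a) = volume.withDensity (fun x => ENNReal.ofReal (pn1 x)))
    (hI1 : Integrable (fun x => Real.log (pn x / p x)) Pn)
    (hI2 : Integrable (fun x => Real.log (pn1 x / p x)) (Pn.bind (mhKernel q a)))
    (hI3 : ∀ x, Integrable (fun x' => cdlbReward p q a x x' * q x' x))
    (hI4 : Integrable (fun x => ∫ x', cdlbReward p q a x x' * q x' x) Pn)
    (hI5 : ∀ x, Integrable (fun x' => Real.log (pn x / (1 + pn x'))) (mhKernel q a x))
    (hI6 : Integrable
      (fun x => ∫ x', Real.log (pn x / (1 + pn x')) ∂(mhKernel q a x)) Pn) :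
    (∫ x, Real.log (pn x / p x) ∂Pn)
        - (∫ x, Real.log (pn1 x / p x) ∂(Pn.bind (mhKernel q a)))
      ≥ (∫ x, (∫ x', cdlbReward p q a x x' * q x' x) ∂Pn)
        + (∫ x, ∫ x', Real.log (pn x / (1 + pn x')) ∂(mhKernel q a x) ∂Pn) := by
  have hκ : Measurable (mhKernel q a) := mhKernel_meas hq_meas ha_meas
  have hf1m : Measurable fun y => Real.log (pn1 y / p y) := (hpn1_meas.div hp_meas).log
  obtain ⟨hBeq, hIBint, hIBae⟩ := integral_bind_aux hκ hf1m hI2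
  -- total mass facts
  have hbindP : (Pn.bind (mhKernel q a)) Set.univ = 1 := by
    rw [Measure.bind_apply MeasurableSet.univ hκ.aemeasurable]
    have : ∀ x, mhKernel q a x Set.univ = 1 :=
      mhKernel_univ hq_meas ha_meas hq_nonneg ha_mem hq_prob hr_mem
    simp only [this, lintegral_one]
    exact hPn_prob.measure_univ
  have hlint1 : ∫⁻ x, ENNReal.ofReal (pn1 x) ∂(volume : Measure (Fin d → ℝ)) = 1 := by
    have h := hbindP
    rw [hPn1, withDensity_apply _ MeasurableSet.univ, Measure.restrict_univ] at h
    exact h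
  have hIpn1 : Integrable pn1 (volume : Measure (Fin d → ℝ)) := by
    refine ⟨hpn1_meas.aestronglyMeasurable, ?_⟩
    rw [hasFiniteIntegral_iff_ofReal (Filter.Eventually.of_forall fun x => (hpn1_pos x).le)]
    rw [hlint1]; exact one_lt_top
  have hintpn1 : (∫ x, pn1 x) = 1 := by
    have := ofReal_integral_eq_lintegral_ofReal hIpn1
      (Filter.Eventually.of_forall fun x => (hpn1_pos x).le)
    rw [hlint1] at this
    exact ENNReal.ofReal_eq_one.mp this
  -- fraction integrability
  have h1pn : ∀ x, (0:ℝ) < 1 + pn x := fun x => by linarith [hpn_pos x]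
  have hfrac_meas : Measurable fun x => pn1 x / (1 + pn x) :=
    hpn1_meas.div (measurable_const.add hpn_meas)
  have hfrac_le : ∀ x, pn1 x / (1 + pn x) ≤ pn1 x := fun x =>
    div_le_self (hpn1_pos x).le (by linarith [hpn_pos x])
  have hfrac_nonneg : ∀ x, 0 ≤ pn1 x / (1 + pn x) := fun x =>
    div_nonneg (hpn1_pos x).le (h1pn x).le
  have hfrac_int : Integrable (fun x => pn1 x / (1 + pn x)) (volume : Measure (Fin d → ℝ)) :=
    hIpn1.mono' hfrac_meas.aestronglyMeasurable (Filter.Eventually.of_forall fun x => by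
      rw [Real.norm_eq_abs, abs_of_nonneg (hfrac_nonneg x)]; exact hfrac_le x)
  have hfracpn_int : Integrable (fun x => pn1 x / (1 + pn x) * pn x)
      (volume : Measure (Fin d → ℝ)) := by
    refine hIpn1.mono' (hfrac_meas.mul hpn_meas).aestronglyMeasurable
      (Filter.Eventually.of_forall fun x => ?_)
    rw [Real.norm_eq_abs, abs_of_nonneg (mul_nonneg (hfrac_nonneg x) (hpn_pos x).le)]
    rw [div_mul_eq_mul_div, div_le_iff₀ (h1pn x)]
    nlinarith [hpn1_pos x, hpn_pos x]
  set c : ℝ := ∫ x', pn1 x' / (1 + pn x') with hc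
  -- ∫ s dPn = 1 - c
  have hsPn_int : Integrable (fun x => pn1 x / (1 + pn x)) Pn := by
    rw [hPn, integrable_withDensity_iff (f := fun x => ENNReal.ofReal (pn x))
      hpn_meas.ennreal_ofReal (Filter.Eventually.of_forall fun x => ofReal_lt_top)]
    refine hfracpn_int.congr (Filter.Eventually.of_forall fun x => ?_)
    show pn1 x / (1 + pn x) * pn x = pn1 x / (1 + pn x) * (ENNReal.ofReal (pn x)).toReal
    rw [ENNReal.toReal_ofReal (hpn_pos x).le]
  have hsPn : (∫ x, pn1 x / (1 + pn x) ∂Pn) = 1 - c := by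
    have h1 : (∫ x, pn1 x / (1 + pn x) ∂Pn) = ∫ x, pn1 x / (1 + pn x) * pn x := by
      rw [hPn, show (fun x => ENNReal.ofReal (pn x))
          = fun x => ((pn x).toNNReal : ℝ≥0∞) from rfl,
        integral_withDensity_eq_integral_smul
          (f := fun x => (pn x).toNNReal) hpn_meas.real_toNNReal]
      congr 1
      funext x
      rw [NNReal.smul_def, Real.coe_toNNReal _ (hpn_pos x).le, smul_eq_mul, mul_comm]
    have h2 : c + ∫ x, pn1 x / (1 + pn x) * pn x = 1 := by
      rw [hc, ← integral_add hfrac_int hfracpn_int]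
      rw [show (fun x => pn1 x / (1 + pn x) + pn1 x / (1 + pn x) * pn x) = fun x => pn1 x by
        funext x; field_simp; rw [div_eq_iff (h1pn x).ne'], hintpn1]
    linarith
  -- the pointwise (in x) inequality, a.e. in Pn
  have hclaim : ∀ᵐ x ∂Pn, 1 - c - pn1 x / (1 + pn x)
      ≤ Real.log (pn x / p x) - (∫ y, Real.log (pn1 y / p y) ∂(mhKernel q a x))
        - (∫ x', cdlbReward p q a x x' * q x' x)
        - (∫ x', Real.log (pn x / (1 + pn x')) ∂(mhKernel q a x)) := by
    filter_upwards [hIBae] with x hIBx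
    set ρ : ℝ := mhR q a x with hρ
    have hρ0 : (0:ℝ) ≤ ρ := (hr_mem x).1
    have hρ1 : ρ ≤ 1 := (hr_mem x).2
    have hq_int := mhQ_integrable hq_prob x
    have hu_int := mhU_integrable hq_meas ha_meas hq_nonneg ha_mem hq_prob x
    have hu_nonneg : ∀ x', 0 ≤ mhU q a x' x := fun x' =>
      mul_nonneg (ha_mem x' x).1 (hq_nonneg x' x)
    have hqu_nonneg : ∀ x', 0 ≤ q x' x - mhU q a x' x := fun x' => by
      have h1 := (ha_mem x' x).1
      have h2 := (ha_mem x' x).2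
      have h3 := hq_nonneg x' x
      show 0 ≤ q x' x - a x' x * q x' x
      nlinarith
    have hf2m : Measurable fun y => Real.log (pn x / (1 + pn y)) :=
      (measurable_const.div (measurable_const.add hpn_meas)).log
    have hIB : (∫ y, Real.log (pn1 y / p y) ∂(mhKernel q a x))
        = (∫ x', mhU q a x' x * Real.log (pn1 x' / p x')) + ρ * Real.log (pn1 x / p x) :=
      mhKernel_integral hq_meas ha_meas hq_nonneg ha_mem hr_mem x _ hf1m hIBx
    have hID : (∫ x', Real.log (pn x / (1 + pn x')) ∂(mhKernel q a x))
        = (∫ x', mhU q a x' x * Real.log (pn x / (1 + pn x')))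
          + ρ * Real.log (pn x / (1 + pn x)) :=
      mhKernel_integral hq_meas ha_meas hq_nonneg ha_mem hr_mem x _ hf2m (hI5 x)
    have hIuf1 : Integrable (fun x' => mhU q a x' x * Real.log (pn1 x' / p x'))
        (volume : Measure (Fin d → ℝ)) :=
      mhKernel_integrable_left hq_meas ha_meas hq_nonneg ha_mem x _ hIBx
    have hIuf2 : Integrable (fun x' => mhU q a x' x * Real.log (pn x / (1 + pn x')))
        (volume : Measure (Fin d → ℝ)) :=
      mhKernel_integrable_left hq_meas ha_meas hq_nonneg ha_mem x _ (hI5 x)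
    set cx : ℝ := Real.log (pn x / p x) with hcx
    have hInt_u : (∫ x', mhU q a x' x) = 1 - ρ := mhU_integral x
    have hInt_qu : (∫ x', (q x' x - mhU q a x' x)) = ρ := by
      rw [integral_sub hq_int hu_int, hq_prob x, hInt_u]; ring
    -- define W and its lower bound LB
    set W : (Fin d → ℝ) → ℝ := fun x' =>
      cx * q x' x - mhU q a x' x * Real.log (pn1 x' / p x')
        - cdlbReward p q a x x' * q x' x
        - mhU q a x' x * Real.log (pn x / (1 + pn x')) with hW
    set LB : (Fin d → ℝ) → ℝ := fun x' =>
      cx * (q x' x - mhU q a x' x)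
        + (mhU q a x' x - pn1 x' / (1 + pn x'))
        + ((q x' x - mhU q a x' x) * Real.log ρ + (q x' x - mhU q a x' x) - q x' x * ρ)
      with hLB
    have hqu_int : Integrable (fun x' => q x' x - mhU q a x' x)
        (volume : Measure (Fin d → ℝ)) := hq_int.sub hu_int
    have hW1 : Integrable (fun x' => cx * q x' x) (volume : Measure (Fin d → ℝ)) :=
      hq_int.const_mul cx
    have hW2 : Integrable (fun x' => cx * q x' x
        - mhU q a x' x * Real.log (pn1 x' / p x')) (volume : Measure (Fin d → ℝ)) :=
      hW1.sub hIuf1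
    have hW3 : Integrable (fun x' => cx * q x' x
        - mhU q a x' x * Real.log (pn1 x' / p x')
        - cdlbReward p q a x x' * q x' x) (volume : Measure (Fin d → ℝ)) :=
      hW2.sub (hI3 x)
    have hWint : Integrable W (volume : Measure (Fin d → ℝ)) := hW3.sub hIuf2
    have hL1 : Integrable (fun x' => cx * (q x' x - mhU q a x' x))
        (volume : Measure (Fin d → ℝ)) := hqu_int.const_mul cx
    have hL2 : Integrable (fun x' => mhU q a x' x - pn1 x' / (1 + pn x'))
        (volume : Measure (Fin d → ℝ)) := hu_int.sub hfrac_int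
    have hL12 : Integrable (fun x' => cx * (q x' x - mhU q a x' x)
        + (mhU q a x' x - pn1 x' / (1 + pn x'))) (volume : Measure (Fin d → ℝ)) :=
      hL1.add hL2
    have hL3a : Integrable (fun x' => (q x' x - mhU q a x' x) * Real.log ρ
        + (q x' x - mhU q a x' x)) (volume : Measure (Fin d → ℝ)) :=
      (hqu_int.mul_const _).add hqu_int
    have hL3 : Integrable (fun x' => (q x' x - mhU q a x' x) * Real.log ρ
        + (q x' x - mhU q a x' x) - q x' x * ρ) (volume : Measure (Fin d → ℝ)) :=
      hL3a.sub (hq_int.mul_const ρ)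
    have hLBint : Integrable LB (volume : Measure (Fin d → ℝ)) := hL12.add hL3
    have hWeq : ∀ x', W x'
        = cx * (q x' x - mhU q a x' x)
          + mhU q a x' x * (Real.log (mhU q a x' x) - Real.log (pn1 x' / (1 + pn x')))
          + (q x' x - mhU q a x' x) * (Real.log (q x' x - mhU q a x' x) - Real.log (q x' x)) := by
      intro x'
      show Real.log (pn x / p x) * q x' x
          - (a x' x * q x' x) * Real.log (pn1 x' / p x')
          - (a x' x * (Real.log (p x') - Real.log (p x))
              - a x' x * Real.log (a x' x)
              - (1 - a x' x) * Real.log (1 - a x' x)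
              - a x' x * Real.log (q x' x)) * q x' x
          - (a x' x * q x' x) * Real.log (pn x / (1 + pn x'))
        = Real.log (pn x / p x) * (q x' x - a x' x * q x' x)
          + (a x' x * q x' x) * (Real.log (a x' x * q x' x)
              - Real.log (pn1 x' / (1 + pn x')))
          + (q x' x - a x' x * q x' x)
              * (Real.log (q x' x - a x' x * q x' x) - Real.log (q x' x))
      exact W_identity (a x' x) (q x' x) (p x) (p x') (pn x) (pn x') (pn1 x')
        (ha_mem x' x).1 (ha_mem x' x).2 (hq_nonneg x' x) (hp_pos x) (hp_pos x')
        (hpn_pos x) (hpn_pos x') (hpn1_pos x')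
    have hpt : ∀ᵐ x' ∂(volume : Measure (Fin d → ℝ)), LB x' ≤ W x' := by
      have hterm2 : ∀ x', mhU q a x' x - pn1 x' / (1 + pn x')
          ≤ mhU q a x' x * (Real.log (mhU q a x' x) - Real.log (pn1 x' / (1 + pn x'))) :=
        fun x' => elem_log_ineq (hu_nonneg x') (div_pos (hpn1_pos x') (h1pn x'))
      rcases eq_or_lt_of_le hρ0 with hρz | hρpos
      · -- ρ = 0 : a.e. q = u
        have hae0 : ∀ᵐ x' ∂(volume : Measure (Fin d → ℝ)), q x' x - mhU q a x' x = 0 := by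
          have := (integral_eq_zero_iff_of_nonneg hqu_nonneg (hq_int.sub hu_int)).mp
            (by rw [hInt_qu, ← hρz])  -- ρ = 0
          filter_upwards [this] with x' hx'
          simpa using hx'
        filter_upwards [hae0] with x' h0
        rw [hWeq x']
        simp only [hLB]
        rw [h0, ← hρz]
        have := hterm2 x'
        nlinarith [this]
      · -- ρ > 0 : pointwise
        refine Filter.Eventually.of_forall fun x' => ?_
        rw [hWeq x']
        simp only [hLB]
        have hterm3 : (q x' x - mhU q a x' x) * Real.log ρ + (q x' x - mhU q a x' x)
            - q x' x * ρ
            ≤ (q x' x - mhU q a x' x)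
              * (Real.log (q x' x - mhU q a x' x) - Real.log (q x' x)) := by
          rcases eq_or_lt_of_le (hq_nonneg x' x) with hq0 | hqpos
          · have hu0 : mhU q a x' x = 0 := by
              show a x' x * q x' x = 0
              rw [← hq0]; ring
            rw [hu0, ← hq0]
            simp
          · have := elem_log_ineq (hqu_nonneg x') (mul_pos hqpos hρpos)
            rw [Real.log_mul hqpos.ne' hρpos.ne'] at this
            nlinarith [this]
        linarith [hterm2 x', hterm3]
    have hWlow : (∫ x', LB x') ≤ ∫ x', W x' := integral_mono_ae hLBint hWint hpt
    have e3 : (∫ x', ((q x' x - mhU q a x' x) * Real.log ρ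
        + (q x' x - mhU q a x' x) - q x' x * ρ))
        = ρ * Real.log ρ + ρ - 1 * ρ := by
      rw [integral_sub hL3a (hq_int.mul_const ρ), integral_add (hqu_int.mul_const _) hqu_int,
        integral_mul_const, integral_mul_const, hInt_qu, hq_prob x]
    have hLBval : (∫ x', LB x') = cx * ρ + (1 - ρ - c) + ρ * Real.log ρ := by
      simp only [hLB]
      rw [integral_add hL12 hL3, integral_add hL1 hL2, integral_const_mul, hInt_qu,
        integral_sub hu_int hfrac_int, hInt_u, ← hc, e3]
      ring
    have hWval : (∫ x', W x')
        = cx - (∫ x', mhU q a x' x * Real.log (pn1 x' / p x'))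
          - (∫ x', cdlbReward p q a x x' * q x' x)
          - (∫ x', mhU q a x' x * Real.log (pn x / (1 + pn x'))) := by
      simp only [hW]
      rw [integral_sub hW3 hIuf2, integral_sub hW2 (hI3 x), integral_sub hW1 hIuf1,
        integral_const_mul, hq_prob x, mul_one]
    -- atom inequality
    have hatom : ρ * Real.log ρ + ρ * cx - ρ * Real.log (pn1 x / p x)
        - ρ * Real.log (pn x / (1 + pn x)) - ρ ≥ - (pn1 x / (1 + pn x)) := by
      have hs : (0:ℝ) < pn1 x / (1 + pn x) := div_pos (hpn1_pos x) (h1pn x)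
      have helem := elem_log_ineq hρ0 hs
      have hlogs : cx - Real.log (pn1 x / p x) - Real.log (pn x / (1 + pn x))
          = - Real.log (pn1 x / (1 + pn x)) := by
        rw [hcx, Real.log_div (hpn_pos x).ne' (hp_pos x).ne',
          Real.log_div (hpn1_pos x).ne' (hp_pos x).ne',
          Real.log_div (hpn_pos x).ne' (h1pn x).ne',
          Real.log_div (hpn1_pos x).ne' (h1pn x).ne']
        ring
      have hmul : ρ * (cx - Real.log (pn1 x / p x) - Real.log (pn x / (1 + pn x)))
          = ρ * (- Real.log (pn1 x / (1 + pn x))) := by rw [hlogs]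
      nlinarith [helem, hmul]
    rw [hIB, hID]
    have := le_trans (le_of_eq hLBval.symm) hWlow
    rw [hWval] at this
    linarith
  -- assemble
  rw [hBeq]
  have hLHS : (∫ x, Real.log (pn x / p x) ∂Pn)
      - (∫ x, ∫ y, Real.log (pn1 y / p y) ∂(mhKernel q a x) ∂Pn)
      - (∫ x, (∫ x', cdlbReward p q a x x' * q x' x) ∂Pn)
      - (∫ x, ∫ x', Real.log (pn x / (1 + pn x')) ∂(mhKernel q a x) ∂Pn)
      = ∫ x, (Real.log (pn x / p x) - (∫ y, Real.log (pn1 y / p y) ∂(mhKernel q a x))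
          - (∫ x', cdlbReward p q a x x' * q x' x)
          - (∫ x', Real.log (pn x / (1 + pn x')) ∂(mhKernel q a x))) ∂Pn := by
    have hIA : Integrable (fun x => Real.log (pn x / p x)
        - ∫ y, Real.log (pn1 y / p y) ∂(mhKernel q a x)) Pn := hI1.sub hIBint
    have hIAB : Integrable (fun x => Real.log (pn x / p x)
        - (∫ y, Real.log (pn1 y / p y) ∂(mhKernel q a x))
        - (∫ x', cdlbReward p q a x x' * q x' x)) Pn := hIA.sub hI4
    rw [integral_sub hIAB hI6, integral_sub hIA hI4, integral_sub hI1 hIBint]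
  have hRHS_int : Integrable (fun x => 1 - c - pn1 x / (1 + pn x)) Pn :=
    (integrable_const _).sub hsPn_int
  have hmain : (∫ x, (1 - c - pn1 x / (1 + pn x)) ∂Pn)
      ≤ ∫ x, (Real.log (pn x / p x) - (∫ y, Real.log (pn1 y / p y) ∂(mhKernel q a x))
          - (∫ x', cdlbReward p q a x x' * q x' x)
          - (∫ x', Real.log (pn x / (1 + pn x')) ∂(mhKernel q a x))) ∂Pn :=
    integral_mono_ae hRHS_int (by
      exact Integrable.sub (Integrable.sub (hI1.sub hIBint) hI4) hI6) hclaim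
  have hzero : (∫ x, (1 - c - pn1 x / (1 + pn x)) ∂Pn) = 0 := by
    rw [integral_sub (integrable_const _) hsPn_int, integral_const, hsPn]
    simp [hPn_prob.measure_univ]
  rw [hzero, ← hLHS] at hmain
  linarith
end
end
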